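/- arXiv:2602.20797 — 5 statements merged into one kernel-verified Lean document; each statement's English description precedes it below -/
import Mathlib

section
/- Let m ≥ 1, let δ > 0 be real, let a₁,…,aₘ ≤ 0 and b₁,…,bₘ be real, and assume the list Δ = (δ, a₁+ib₁, a₁−ib₁, …, aₘ+ibₘ, aₘ−ibₘ) of 2m+1 complex numbers is realizable. Fix an index k with bₖ ≥ 0. Then for every t ≥ 0 the perturbed list Δ′, obtained from Δ by replacing δ with δ+2t and the pair aₖ ± ibₖ with (aₖ−t) ± i(bₖ−t) (all other entries unchanged), is realizable. -/
open Matrix Polynomial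

noncomputable section LaffeyAux



/-- Canonical monic quadratic `X² + u X + v`. -/
def Qp (u v : ℝ) : Polynomial ℝ := X^2 + C u * X + C v

lemma Qp_eq (u v : ℝ) : Qp u v = X^2 + (C u * X + C v) := by rw [Qp]; ring

lemma Qp_lin_degree (u v : ℝ) : (C u * X + C v).degree < 2 :=
  lt_of_le_of_lt degree_linear_le (by norm_num)

lemma Qp_degree (u v : ℝ) : (Qp u v).degree = 2 := by
  rw [Qp_eq, degree_add_eq_left_of_degree_lt (by rw [degree_X_pow]; exact_mod_cast Qp_lin_degree u v),
    degree_X_pow]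
  norm_num

lemma Qp_monic (u v : ℝ) : (Qp u v).Monic := by
  rw [Qp_eq]
  exact monic_X_pow_add (by simpa using Qp_lin_degree u v)

lemma Qp_natDegree (u v : ℝ) : (Qp u v).natDegree = 2 :=
  natDegree_eq_of_degree_eq_some (Qp_degree u v)

lemma Qp_coeff_two (u v : ℝ) : (Qp u v).coeff 2 = 1 := by
  simp [Qp, coeff_X, coeff_C]

lemma Qp_coeff_one (u v : ℝ) : (Qp u v).coeff 1 = u := by
  simp [Qp, coeff_X, coeff_C]

lemma Qp_coeff_zero (u v : ℝ) : (Qp u v).coeff 0 = v := by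
  simp [Qp, coeff_X, coeff_C]

lemma Qp_coeff_nonneg (u v : ℝ) (hu : 0 ≤ u) (hv : 0 ≤ v) (j : ℕ) : 0 ≤ (Qp u v).coeff j := by
  match j with
  | 0 => rw [Qp_coeff_zero]; exact hv
  | 1 => rw [Qp_coeff_one]; exact hu
  | 2 => rw [Qp_coeff_two]; norm_num
  | (n+3) => rw [coeff_eq_zero_of_natDegree_lt (by rw [Qp_natDegree]; omega)]

/-- coefficient of a product with a `Qp`. -/
lemma coeff_Qp_mul (G : Polynomial ℝ) (u v : ℝ) (k : ℕ) :
    (Qp u v * G).coeff k = (if 2 ≤ k then G.coeff (k-2) else 0)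
      + u * (if 1 ≤ k then G.coeff (k-1) else 0) + v * G.coeff k := by
  have h : Qp u v * G = G * X^2 + C u * (G * X^1) + C v * G := by rw [Qp]; ring
  rw [h]
  simp only [coeff_add, coeff_C_mul, coeff_mul_X_pow']

lemma coeff_linear_mul (G : Polynomial ℝ) (d : ℝ) (k : ℕ) :
    ((X - C d) * G).coeff k = (if 1 ≤ k then G.coeff (k-1) else 0) - d * G.coeff k := by
  have h : (X - C d) * G = G * X^1 - C d * G := by ring
  rw [h]
  simp only [coeff_sub, coeff_C_mul, coeff_mul_X_pow']


def Mσ (s : Multiset (ℝ × ℝ)) : ℝ := (s.map Prod.fst).sum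
def MW (s : Multiset (ℝ × ℝ)) : ℝ := (s.map Prod.snd).sum
def MC2 (s : Multiset (ℝ × ℝ)) : ℝ := (s.map fun p => p.1^2).sum
def MF (Δ : ℝ) (s : Multiset (ℝ × ℝ)) : ℝ := 2*Δ*Mσ s - 2*(Mσ s)^2 + MC2 s

@[simp] lemma Mσ_zero : Mσ 0 = 0 := by simp [Mσ]
@[simp] lemma MW_zero : MW 0 = 0 := by simp [MW]
@[simp] lemma MC2_zero : MC2 0 = 0 := by simp [MC2]
@[simp] lemma Mσ_cons (x : ℝ × ℝ) (s : Multiset (ℝ × ℝ)) : Mσ (x ::ₘ s) = x.1 + Mσ s := by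
  simp [Mσ]
@[simp] lemma MW_cons (x : ℝ × ℝ) (s : Multiset (ℝ × ℝ)) : MW (x ::ₘ s) = x.2 + MW s := by
  simp [MW]
@[simp] lemma MC2_cons (x : ℝ × ℝ) (s : Multiset (ℝ × ℝ)) : MC2 (x ::ₘ s) = x.1^2 + MC2 s := by
  simp [MC2]

lemma Mσ_nonneg (s : Multiset (ℝ × ℝ)) (h : ∀ x ∈ s, 0 ≤ x.1) : 0 ≤ Mσ s := by
  induction s using Multiset.induction with
  | empty => simp
  | cons a s ih =>
    have := h a (Multiset.mem_cons_self a s)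
    have := ih (fun x hx => h x (Multiset.mem_cons_of_mem hx))
    simp only [Mσ_cons]; linarith

lemma MC2_le_sq (s : Multiset (ℝ × ℝ)) (h : ∀ x ∈ s, 0 ≤ x.1) : MC2 s ≤ (Mσ s)^2 := by
  induction s using Multiset.induction with
  | empty => simp
  | cons a s ih =>
    have h1 := h a (Multiset.mem_cons_self a s)
    have h2 := Mσ_nonneg s (fun x hx => h x (Multiset.mem_cons_of_mem hx))
    have h3 := ih (fun x hx => h x (Multiset.mem_cons_of_mem hx))
    simp only [MC2_cons, Mσ_cons]
    nlinarith

lemma exists_min_key (g : ℝ × ℝ → ℝ) (s : Multiset (ℝ × ℝ)) (hs : s ≠ 0) :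
    ∃ x ∈ s, ∀ y ∈ s, g x ≤ g y := by
  induction s using Multiset.induction with
  | empty => exact absurd rfl hs
  | cons a s ih =>
    rcases eq_or_ne s 0 with rfl | hne
    · refine ⟨a, by simp, ?_⟩
      intro y hy
      simp only [Multiset.cons_zero, Multiset.mem_singleton] at hy
      subst hy; exact le_rfl
    · obtain ⟨x, hx, hmin⟩ := ih hne
      rcases le_total (g a) (g x) with hle | hle
      · refine ⟨a, Multiset.mem_cons_self a s, ?_⟩
        intro y hy
        rcases Multiset.mem_cons.mp hy with rfl | hy
        · exact le_refl _
        · exact le_trans hle (hmin y hy)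
      · refine ⟨x, Multiset.mem_cons_of_mem hx, ?_⟩
        intro y hy
        rcases Multiset.mem_cons.mp hy with rfl | hy
        · exact hle
        · exact hmin y hy

lemma sum_map_g (Δ A : ℝ) (s : Multiset (ℝ × ℝ)) :
    (s.map (fun x => 2*Δ*x.1 - 4*A*x.1 + 3*x.1^2 - x.2)).sum
      = 2*Δ*Mσ s - 4*A*Mσ s + 3*MC2 s - MW s := by
  induction s using Multiset.induction with
  | empty => simp
  | cons a s ih =>
    simp only [Multiset.map_cons, Multiset.sum_cons, ih, Mσ_cons, MC2_cons, MW_cons]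
    ring

/-- prefix conditions for a list -/
def Conds (Δ : ℝ) (l : List (ℝ × ℝ)) : Prop :=
  ∀ p : List (ℝ × ℝ), p <+: l → MW ↑p ≤ MF Δ ↑p

theorem ordering_exists (Δ : ℝ) (s : Multiset (ℝ × ℝ))
    (hpos : ∀ x ∈ s, 0 ≤ x.1 ∧ 0 ≤ x.2) (hbud : MW s ≤ MF Δ s) :
    ∃ l : List (ℝ × ℝ), (l : Multiset (ℝ × ℝ)) = s ∧ Conds Δ l := by
  induction s using Multiset.strongInductionOn with
  | ih s IH =>
  rcases eq_or_ne s 0 with rfl | hne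
  · refine ⟨[], rfl, ?_⟩
    intro p hp
    rw [List.prefix_nil.mp hp]
    simp [MF]
  · set g : ℝ × ℝ → ℝ := fun x => 2*Δ*x.1 - 4*(Mσ s)*x.1 + 3*x.1^2 - x.2 with hg
    obtain ⟨x, hxs, hmin⟩ := exists_min_key g s hne
    have hslack : 0 ≤ MF Δ s - MW s := by linarith
    have hsum : (s.map g).sum ≤ MF Δ s - MW s := by
      rw [hg, sum_map_g]
      have := MC2_le_sq s (fun x hx => (hpos x hx).1)
      simp only [MF]
      nlinarith
    have hcard : 0 < Multiset.card s := Multiset.card_pos.mpr hne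
    have hkey : g x ≤ MF Δ s - MW s := by
      rcases le_or_gt (g x) 0 with h0 | h0
      · linarith
      · have h1 : (Multiset.card (s.map g)) • (g x) ≤ (s.map g).sum := by
          apply Multiset.card_nsmul_le_sum
          intro y hy
          obtain ⟨z, hz, rfl⟩ := Multiset.mem_map.mp hy
          exact hmin z hz
        rw [Multiset.card_map, nsmul_eq_mul] at h1
        have hc1 : (1:ℝ) ≤ (Multiset.card s : ℝ) := by exact_mod_cast hcard
        nlinarith
    set t := s.erase x with ht
    have hst : x ::ₘ t = s := Multiset.cons_erase hxs
    have hMσ : Mσ s = x.1 + Mσ t := by rw [← hst]; simp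
    have hMW : MW s = x.2 + MW t := by rw [← hst]; simp
    have hMC2 : MC2 s = x.1^2 + MC2 t := by rw [← hst]; simp
    have hbud' : MW t ≤ MF Δ t := by
      simp only [MF] at hkey ⊢
      rw [hg] at hkey
      simp only at hkey
      rw [hMσ, hMW, hMC2] at hkey
      nlinarith [hkey]
    have hpos' : ∀ y ∈ t, 0 ≤ y.1 ∧ 0 ≤ y.2 :=
      fun y hy => hpos y (Multiset.mem_of_mem_erase hy)
    obtain ⟨l', hl', hc'⟩ := IH t (Multiset.erase_lt.mpr hxs) hpos' hbud'
    have hcoe : (↑(l' ++ [x]) : Multiset (ℝ×ℝ)) = s := by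
      have h1 : (↑(l' ++ [x]) : Multiset (ℝ×ℝ)) = ↑l' + {x} := rfl
      rw [h1, hl', add_comm, Multiset.singleton_add, hst]
    refine ⟨l' ++ [x], hcoe, ?_⟩
    intro p hp
    rcases le_or_gt p.length l'.length with hlen | hlen
    · exact hc' p (List.prefix_of_prefix_length_le hp (l'.prefix_append [x]) hlen)
    · have hfull : p = l' ++ [x] := by
        have h1 := hp.length_le
        simp only [List.length_append, List.length_singleton] at h1
        exact List.IsPrefix.eq_of_length hp (by rw [List.length_append, List.length_singleton]; omega)
      subst hfull
      rw [hcoe]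
      exact hbud


/-- product of the quadratics attached to a list of pairs (c, w) -/
def Gq (l : List (ℝ × ℝ)) : Polynomial ℝ := (l.map fun p => Qp (2*p.1) (p.1^2 + p.2)).prod

lemma Mσ_coe (l : List (ℝ × ℝ)) : Mσ ↑l = (l.map Prod.fst).sum := by simp [Mσ]
lemma MW_coe (l : List (ℝ × ℝ)) : MW ↑l = (l.map Prod.snd).sum := by simp [MW]
lemma MC2_coe (l : List (ℝ × ℝ)) : MC2 ↑l = (l.map fun p => p.1^2).sum := by simp [MC2]
lemma Mσ_append (l₁ l₂ : List (ℝ × ℝ)) : Mσ ↑(l₁ ++ l₂) = Mσ ↑l₁ + Mσ ↑l₂ := by simp [Mσ_coe]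
lemma MW_append (l₁ l₂ : List (ℝ × ℝ)) : MW ↑(l₁ ++ l₂) = MW ↑l₁ + MW ↑l₂ := by simp [MW_coe]
lemma MC2_append (l₁ l₂ : List (ℝ × ℝ)) : MC2 ↑(l₁ ++ l₂) = MC2 ↑l₁ + MC2 ↑l₂ := by simp [MC2_coe]
lemma Mσ_single (x : ℝ × ℝ) : Mσ ↑[x] = x.1 := by simp [Mσ]
lemma MW_single (x : ℝ × ℝ) : MW ↑[x] = x.2 := by simp [MW]
lemma MC2_single (x : ℝ × ℝ) : MC2 ↑[x] = x.1^2 := by simp [MC2]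

theorem core_lemma (Δ : ℝ) (hΔ : 0 ≤ Δ) :
    ∀ l : List (ℝ × ℝ), l ≠ [] → (∀ x ∈ l, 0 ≤ x.1 ∧ 0 ≤ x.2) →
    2 * Mσ ↑l ≤ Δ → Conds Δ l →
    (Gq l).Monic ∧ (Gq l).natDegree = 2*l.length ∧ (∀ j, 0 ≤ (Gq l).coeff j) ∧
    (∀ k, 1 ≤ k → k ≤ 2*l.length → (Gq l).coeff (k-1) ≤ Δ * (Gq l).coeff k) ∧
    (Gq l).coeff (2*l.length - 1) = 2 * Mσ ↑l ∧
    (Gq l).coeff (2*l.length - 2) = 2*(Mσ ↑l)^2 - MC2 ↑l + MW ↑l := by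
  intro l
  induction l using List.reverseRecOn with
  | nil => intro h; exact absurd rfl h
  | append_singleton l₀ x IH =>
    intro _ hpos hσΔ hconds
    obtain ⟨c, w⟩ := x
    have hc0 : 0 ≤ c := (hpos (c,w) (by simp)).1
    have hw0 : 0 ≤ w := (hpos (c,w) (by simp)).2
    have hGq : Gq (l₀ ++ [(c,w)]) = Qp (2*c) (c^2 + w) * Gq l₀ := by
      rw [Gq, Gq, List.map_append, List.prod_append]
      simp [mul_comm]
    have hσsum : Mσ ↑(l₀ ++ [(c,w)]) = Mσ ↑l₀ + c := by
      rw [Mσ_append, Mσ_single]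
    have hWsum : MW ↑(l₀ ++ [(c,w)]) = MW ↑l₀ + w := by
      rw [MW_append, MW_single]
    have hCsum : MC2 ↑(l₀ ++ [(c,w)]) = MC2 ↑l₀ + c^2 := by
      rw [MC2_append, MC2_single]
    have hfull : MW ↑(l₀ ++ [(c,w)]) ≤ MF Δ ↑(l₀ ++ [(c,w)]) :=
      hconds _ (List.prefix_refl _)
    rw [hWsum] at hfull
    rw [MF, hσsum, hCsum] at hfull
    rw [hσsum] at hσΔ
    have hlen : (l₀ ++ [(c,w)]).length = l₀.length + 1 := by simp
    rcases eq_or_ne l₀ [] with rfl | hl₀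
    · -- base case: single pair
      have hG : Gq ([] ++ [(c,w)]) = Qp (2*c) (c^2+w) := by
        rw [hGq]; simp [Gq]
      have hσ0 : Mσ (↑([] : List (ℝ×ℝ))) = 0 := by simp [Mσ]
      have hW0 : MW (↑([] : List (ℝ×ℝ))) = 0 := by simp [MW]
      have hC0 : MC2 (↑([] : List (ℝ×ℝ))) = 0 := by simp [MC2]
      rw [hσ0] at hσΔ hfull
      rw [hW0, hC0] at hfull
      rw [hG, hlen]
      simp only [List.length_nil]
      refine ⟨Qp_monic _ _, by rw [Qp_natDegree], ?_, ?_, ?_, ?_⟩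
      · exact Qp_coeff_nonneg _ _ (by linarith) (by positivity)
      · intro k hk1 hk2
        interval_cases k
        · rw [show (1:ℕ) - 1 = 0 from rfl, Qp_coeff_zero, Qp_coeff_one]
          nlinarith
        · rw [show (2:ℕ) - 1 = 1 from rfl, Qp_coeff_one, Qp_coeff_two]
          nlinarith
      · rw [show 2*(0+1) - 1 = 1 from rfl, Qp_coeff_one, hσsum, hσ0]
        ring
      · rw [show 2*(0+1) - 2 = 0 from rfl, Qp_coeff_zero, hσsum, hWsum, hCsum, hσ0, hW0, hC0]
        ring
    · -- inductive step
      have hlpos : 1 ≤ l₀.length := by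
        rcases List.exists_cons_of_ne_nil hl₀ with ⟨y, t, rfl⟩
        simp
      have hN2 : 2 ≤ 2 * l₀.length := by omega
      have hpos₀ : ∀ y ∈ l₀, 0 ≤ y.1 ∧ 0 ≤ y.2 :=
        fun y hy => hpos y (List.mem_append_left _ hy)
      have hσ₀nn : 0 ≤ Mσ ↑l₀ := by
        rw [Mσ_coe]
        apply List.sum_nonneg
        intro a ha
        obtain ⟨y, hy, rfl⟩ := List.mem_map.mp ha
        exact (hpos₀ y hy).1
      have hσ₀Δ : 2 * Mσ ↑l₀ ≤ Δ := by linarith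
      have hconds₀ : Conds Δ l₀ := fun p hp => hconds p (hp.trans (l₀.prefix_append [(c,w)]))
      obtain ⟨hM, hdeg, hnn, hrat, htop1, htop2⟩ := IH hl₀ hpos₀ hσ₀Δ hconds₀
      have hG1 : (Gq l₀).coeff (2*l₀.length) = 1 := by
        have := hM.coeff_natDegree
        rwa [hdeg] at this
      have hGz : ∀ j, 2*l₀.length < j → (Gq l₀).coeff j = 0 := by
        intro j hj
        exact coeff_eq_zero_of_natDegree_lt (by rw [hdeg]; omega)
      rw [hGq, hlen]
      have hmon : (Qp (2*c) (c^2+w) * Gq l₀).Monic := (Qp_monic _ _).mul hM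
      have hdeg' : (Qp (2*c) (c^2+w) * Gq l₀).natDegree = 2*(l₀.length+1) := by
        rw [(Qp_monic _ _).natDegree_mul hM, Qp_natDegree, hdeg]
        omega
      refine ⟨hmon, hdeg', ?_, ?_, ?_, ?_⟩
      · intro j
        rw [coeff_Qp_mul]
        have := hnn j
        have h1 : 0 ≤ (if 2 ≤ j then (Gq l₀).coeff (j-2) else 0) := by
          split_ifs; exacts [hnn _, le_refl 0]
        have h2 : 0 ≤ (if 1 ≤ j then (Gq l₀).coeff (j-1) else 0) := by
          split_ifs; exacts [hnn _, le_refl 0]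
        have : 0 ≤ 2*c := by linarith
        positivity
      · intro k hk1 hk2
        rw [coeff_Qp_mul, coeff_Qp_mul]
        rcases lt_or_ge k (2*l₀.length+1) with hkN | hkN
        · -- k ≤ N : termwise
          have e1 : (if 2 ≤ k-1 then (Gq l₀).coeff (k-1-2) else 0)
              ≤ Δ * (if 2 ≤ k then (Gq l₀).coeff (k-2) else 0) := by
            rcases le_or_gt 3 k with h3 | h3
            · rw [if_pos (by omega), if_pos (by omega)]
              have h := hrat (k-2) (by omega) (by omega)
              rw [show k-2-1 = k-1-2 from by omega] at h
              exact h
            · rcases le_or_gt 2 k with h2 | h2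
              · rw [if_neg (by omega), if_pos (by omega)]
                exact mul_nonneg hΔ (hnn _)
              · rw [if_neg (by omega), if_neg (by omega)]
                simp
          have e2 : (2*c) * (if 1 ≤ k-1 then (Gq l₀).coeff (k-1-1) else 0)
              ≤ Δ * ((2*c) * (if 1 ≤ k then (Gq l₀).coeff (k-1) else 0)) := by
            rcases le_or_gt 2 k with h2 | h2
            · rw [if_pos (by omega), if_pos (by omega)]
              have h := hrat (k-1) (by omega) (by omega)
              rw [show k-1-1 = k-1-1 from rfl] at h
              calc (2*c) * (Gq l₀).coeff (k-1-1) ≤ (2*c) * (Δ * (Gq l₀).coeff (k-1)) :=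
                    mul_le_mul_of_nonneg_left h (by linarith)
                _ = Δ * ((2*c) * (Gq l₀).coeff (k-1)) := by ring
            · rw [if_neg (by omega), if_pos (by omega)]
              have h0 : (0:ℝ) ≤ 2*c := by linarith
              simpa using mul_nonneg hΔ (mul_nonneg h0 (hnn (k-1)))
          have e3 : (c^2+w) * (Gq l₀).coeff (k-1)
              ≤ Δ * ((c^2+w) * (Gq l₀).coeff k) := by
            have h := hrat k hk1 (by omega)
            have h0 : (0:ℝ) ≤ c^2+w := by positivity
            calc (c^2+w) * (Gq l₀).coeff (k-1) ≤ (c^2+w) * (Δ * (Gq l₀).coeff k) :=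
                  mul_le_mul_of_nonneg_left h h0
              _ = Δ * ((c^2+w) * (Gq l₀).coeff k) := by ring
          linarith [e1, e2, e3]
        · rcases (by omega : k = 2*l₀.length + 1 ∨ k = 2*l₀.length + 2) with rfl | rfl
          · -- k = N+1
            rw [if_pos (by omega), if_pos (by omega), if_pos (by omega), if_pos (by omega)]
            rw [show 2*l₀.length+1-1 = 2*l₀.length from by omega,
              show 2*l₀.length+1-2 = 2*l₀.length-1 from by omega]
            rw [htop1, htop2, hG1, hGz (2*l₀.length+1) (by omega)]
            nlinarith [hfull]
          · -- k = N+2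
            rw [if_pos (by omega), if_pos (by omega), if_pos (by omega), if_pos (by omega)]
            rw [show 2*l₀.length+2-1 = 2*l₀.length+1 from by omega,
              show 2*l₀.length+2-2 = 2*l₀.length from by omega,
              show 2*l₀.length+1-2 = 2*l₀.length-1 from by omega,
              show 2*l₀.length+1-1 = 2*l₀.length from by omega]
            rw [htop1, hG1, hGz (2*l₀.length+1) (by omega), hGz (2*l₀.length+2) (by omega)]
            nlinarith
      · rw [show 2*(l₀.length+1) - 1 = 2*l₀.length+1 from by omega, coeff_Qp_mul]
        rw [if_pos (by omega), if_pos (by omega)]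
        rw [show 2*l₀.length+1-2 = 2*l₀.length-1 from by omega,
          show 2*l₀.length+1-1 = 2*l₀.length from by omega]
        rw [htop1, hG1, hGz (2*l₀.length+1) (by omega), hσsum]
        ring
      · rw [show 2*(l₀.length+1) - 2 = 2*l₀.length from by omega, coeff_Qp_mul]
        rw [if_pos (by omega), if_pos (by omega)]
        rw [htop1, htop2, hG1, hσsum, hWsum, hCsum]
        ring


variable {n : ℕ}

/-- companion-type matrix of a polynomial `h` (to be used with `h` monic of degree `n`):
subdiagonal of 1s, last column `-h.coeff i`. -/
def companion (n : ℕ) (h : Polynomial ℝ) : Matrix (Fin n) (Fin n) ℝ :=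
  Matrix.of fun i j => (if (i:ℕ) = (j:ℕ)+1 then 1 else 0) + (if (j:ℕ) = n-1 then -h.coeff i else 0)

lemma companion_apply (h : Polynomial ℝ) (i j : Fin n) :
    companion n h i j
      = (if (i:ℕ) = (j:ℕ)+1 then 1 else 0) + (if (j:ℕ) = n-1 then -h.coeff i else 0) := rfl

lemma companion_nonneg (h : Polynomial ℝ) (hc : ∀ j, j < n → h.coeff j ≤ 0) (i j : Fin n) :
    0 ≤ companion n h i j := by
  rw [companion_apply]
  have := hc i i.isLt
  split_ifs <;> simp <;> linarith

lemma companion_mulVec_single (h : Polynomial ℝ) (j : Fin n) :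
    (companion n h) *ᵥ (Pi.single j 1) = fun i => companion n h i j := by
  ext i
  simp [Matrix.mulVec_single]

lemma companion_col_lt (h : Polynomial ℝ) (j : Fin n) (hj : (j:ℕ)+1 < n) :
    (companion n h) *ᵥ (Pi.single j 1) = Pi.single (⟨(j:ℕ)+1, hj⟩ : Fin n) 1 := by
  rw [companion_mulVec_single]
  ext i
  rw [companion_apply, Pi.single_apply]
  have hjn : (j:ℕ) ≠ n-1 := by omega
  rw [if_neg hjn, add_zero]
  by_cases hij : (i:ℕ) = (j:ℕ)+1
  · rw [if_pos hij, if_pos (Fin.ext hij)]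
  · rw [if_neg hij, if_neg (fun hh => hij (by rw [hh]))]

lemma companion_col_last (h : Polynomial ℝ) (hn : 0 < n) :
    (companion n h) *ᵥ (Pi.single (⟨n-1, by omega⟩ : Fin n) 1)
      = fun i : Fin n => -h.coeff (i:ℕ) := by
  rw [companion_mulVec_single]
  ext i
  rw [companion_apply]
  simp only [Fin.val_mk]
  rw [if_neg (by have := i.isLt; omega)]
  simp

lemma companion_pow_e0 (h : Polynomial ℝ) (hn : 0 < n) (k : ℕ) (hk : k < n) :
    (companion n h)^k *ᵥ (Pi.single (⟨0, hn⟩ : Fin n) 1) = Pi.single (⟨k, hk⟩ : Fin n) 1 := by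
  induction k with
  | zero => rw [pow_zero, Matrix.one_mulVec]
  | succ m ih =>
    rw [pow_succ', ← Matrix.mulVec_mulVec, ih (by omega)]
    exact companion_col_lt h _ hk

lemma sum_mulVec {α : Type*} (s : Finset α) (f : α → Matrix (Fin n) (Fin n) ℝ) (v : Fin n → ℝ) :
    (∑ a ∈ s, f a) *ᵥ v = ∑ a ∈ s, (f a) *ᵥ v := by
  classical
  induction s using Finset.induction_on with
  | empty => simp [Matrix.zero_mulVec]
  | @insert _ _ hni ih =>
    rw [Finset.sum_insert hni, Finset.sum_insert hni, Matrix.add_mulVec, ih]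

lemma aeval_companion_mulVec_e0 (h : Polynomial ℝ) (hn : 0 < n) (q : Polynomial ℝ)
    (hq : q.natDegree < n) :
    (aeval (companion n h) q) *ᵥ (Pi.single (⟨0, hn⟩ : Fin n) 1)
      = fun i : Fin n => q.coeff (i:ℕ) := by
  rw [Polynomial.aeval_eq_sum_range' hq, sum_mulVec]
  ext i
  rw [Finset.sum_apply]
  have key : ∀ k ∈ Finset.range n,
      ((q.coeff k • (companion n h)^k) *ᵥ (Pi.single (⟨0, hn⟩ : Fin n) 1)) i
        = if (i:ℕ) = k then q.coeff k else 0 := by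
    intro k hk
    rw [Finset.mem_range] at hk
    rw [Matrix.smul_mulVec, companion_pow_e0 h hn k hk]
    simp [Pi.single_apply, Fin.ext_iff]
  rw [Finset.sum_congr rfl key, Finset.sum_ite_eq (Finset.range n) (i:ℕ) (fun k => q.coeff k),
    if_pos (Finset.mem_range.mpr i.isLt)]

/-- a polynomial of degree < n annihilating the companion matrix is 0 -/
lemma eq_zero_of_aeval_companion (h : Polynomial ℝ) (hn : 0 < n) (q : Polynomial ℝ)
    (hq : q.natDegree < n) (hann : aeval (companion n h) q = 0) : q = 0 := by
  have h0 := aeval_companion_mulVec_e0 h hn q hq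
  rw [hann] at h0
  ext k
  rcases lt_or_ge k n with hk | hk
  · have := congrFun h0.symm ⟨k, hk⟩
    simpa using this
  · rw [coeff_eq_zero_of_natDegree_lt (by omega), coeff_zero]

lemma aeval_companion_self (h : Polynomial ℝ) (hn : 0 < n) (hmon : h.Monic)
    (hdeg : h.natDegree = n) : aeval (companion n h) h = 0 := by
  set M := companion n h with hM
  set r := h - X^n with hr
  have hdeg' : h.degree = (n:ℕ) := by
    rw [Polynomial.degree_eq_natDegree hmon.ne_zero, hdeg]
  have hd : r.degree < (n : WithBot ℕ) := by
    have := Polynomial.degree_sub_lt (by rw [degree_X_pow, hdeg']) hmon.ne_zero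
      (by rw [hmon.leadingCoeff, leadingCoeff_X_pow])
    rw [hdeg'] at this
    exact this
  have hrdeg : r.natDegree < n := by
    rcases eq_or_ne r 0 with h0 | h0
    · rw [h0]; simpa using hn
    · exact (Polynomial.natDegree_lt_iff_degree_lt h0).mpr hd
  have hcoeffr : ∀ k, k < n → r.coeff k = h.coeff k := by
    intro k hk
    rw [hr, Polynomial.coeff_sub, Polynomial.coeff_X_pow, if_neg (by omega)]
    ring
  have hsplit : h = X^n + r := by rw [hr]; ring
  have e0 : (aeval M h) *ᵥ (Pi.single (⟨0, hn⟩ : Fin n) 1) = 0 := by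
    have hh : aeval M h = M^n + aeval M r := by
      conv_lhs => rw [hsplit]
      rw [map_add]
      congr 1
      simp
    rw [hh, Matrix.add_mulVec]
    have h2 : M^n *ᵥ (Pi.single (⟨0, hn⟩ : Fin n) 1)
        = fun i : Fin n => -h.coeff (i:ℕ) := by
      have e : n - 1 + 1 = n := by omega
      have hpow : M^n = M * M^(n-1) := by
        calc M^n = M^(n-1+1) := (congrArg (fun t => M^t) e).symm
          _ = M * M^(n-1) := pow_succ' M (n-1)
      rw [hpow, ← Matrix.mulVec_mulVec, hM,
        companion_pow_e0 h hn (n-1) (by omega)]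
      exact companion_col_last h hn
    rw [h2, hM, aeval_companion_mulVec_e0 h hn r hrdeg]
    ext i
    simp [hcoeffr (i:ℕ) i.isLt]
  have key : ∀ j : Fin n, (aeval M h) *ᵥ (Pi.single j 1) = 0 := by
    intro j
    have hXj : aeval M (X^(j:ℕ) : Polynomial ℝ) = M^(j:ℕ) := by simp
    have hcomm : aeval M h * M^(j:ℕ) = M^(j:ℕ) * aeval M h := by
      calc aeval M h * M^(j:ℕ) = aeval M (h * X^(j:ℕ)) := by rw [_root_.map_mul, hXj]
        _ = aeval M (X^(j:ℕ) * h) := by rw [mul_comm h]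
        _ = M^(j:ℕ) * aeval M h := by rw [_root_.map_mul, hXj]
    have hsingle : (Pi.single j 1 : Fin n → ℝ)
        = M^(j:ℕ) *ᵥ (Pi.single (⟨0, hn⟩ : Fin n) 1) := by
      rw [hM, companion_pow_e0 h hn (j:ℕ) j.isLt]
    rw [hsingle, Matrix.mulVec_mulVec, hcomm, ← Matrix.mulVec_mulVec, e0,
      Matrix.mulVec_zero]
  ext i j
  have := congrFun (key j) i
  rw [Matrix.mulVec_single] at this
  simpa using this

/-- The characteristic polynomial of the companion matrix is the polynomial itself. -/
theorem charpoly_companion (h : Polynomial ℝ) (hn : 0 < n) (hmon : h.Monic)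
    (hdeg : h.natDegree = n) : (companion n h).charpoly = h := by
  haveI : Nonempty (Fin n) := ⟨⟨0, hn⟩⟩
  set M := companion n h with hM
  have hcp_deg : M.charpoly.natDegree = n := by
    rw [Matrix.charpoly_natDegree_eq_dim]
    simp
  have hcp_mon : M.charpoly.Monic := Matrix.charpoly_monic M
  set q := M.charpoly - h with hq
  have hqann : aeval M q = 0 := by
    rw [hq, map_sub, Matrix.aeval_self_charpoly, aeval_companion_self h hn hmon hdeg]
    simp
  have hqdeg : q.natDegree < n := by
    rcases eq_or_ne q 0 with h0 | h0
    · rw [h0]; simpa using hn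
    · apply (Polynomial.natDegree_lt_iff_degree_lt h0).mpr
      have : (M.charpoly - h).degree < M.charpoly.degree := Polynomial.degree_sub_lt
        (by show M.charpoly.degree = h.degree
            rw [Polynomial.degree_eq_natDegree hcp_mon.ne_zero, hcp_deg,
              Polynomial.degree_eq_natDegree hmon.ne_zero, hdeg])
        hcp_mon.ne_zero
        (by show M.charpoly.leadingCoeff = h.leadingCoeff
            rw [hcp_mon.leadingCoeff, hmon.leadingCoeff])
      rwa [Polynomial.degree_eq_natDegree hcp_mon.ne_zero, hcp_deg] at this
  have hz := eq_zero_of_aeval_companion h hn q hqdeg hqann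
  exact sub_eq_zero.mp hz

variable {n : ℕ}

lemma aeval_eq_comp (p q : Polynomial ℝ) : aeval q p = p.comp q := by
  rw [Polynomial.aeval_def, Polynomial.comp, Polynomial.algebraMap_eq]

theorem charpoly_smul_one_add (α : ℝ) (M : Matrix (Fin n) (Fin n) ℝ) :
    (α • (1 : Matrix (Fin n) (Fin n) ℝ) + M).charpoly = (M.charpoly).comp (X - C α) := by
  classical
  set φ : Polynomial ℝ →+* Polynomial ℝ := (aeval (X - C α) : Polynomial ℝ →ₐ[ℝ] Polynomial ℝ).toRingHom with hφ
  have hφX : φ X = X - C α := by simp [hφ]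
  have hφC : ∀ r : ℝ, φ (C r) = C r := by intro r; simp [hφ]
  have hmap : φ.mapMatrix (charmatrix M) = charmatrix (α • (1 : Matrix (Fin n) (Fin n) ℝ) + M) := by
    ext i j
    rw [RingHom.mapMatrix_apply, Matrix.map_apply]
    by_cases hij : i = j
    · subst hij
      rw [charmatrix_apply_eq, charmatrix_apply_eq, map_sub, hφX, hφC]
      have : (α • (1 : Matrix (Fin n) (Fin n) ℝ) + M) i i = α + M i i := by
        simp
      rw [this, C_add]
      ring
    · rw [charmatrix_apply_ne _ _ _ hij, charmatrix_apply_ne _ _ _ hij, map_neg, hφC]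
      have : (α • (1 : Matrix (Fin n) (Fin n) ℝ) + M) i j = M i j := by
        simp [Matrix.one_apply_ne hij]
      rw [this]
  have := RingHom.map_det φ (charmatrix M)
  rw [hmap] at this
  rw [Matrix.charpoly, Matrix.charpoly, ← this, ← aeval_eq_comp]
  rfl

variable {n : ℕ}

theorem charpoly_coeff_sub2_le (M : Matrix (Fin n) (Fin n) ℝ) (hn : 3 ≤ n)
    (hM : ∀ i j, 0 ≤ M i j) :
    M.charpoly.coeff (n-2) ≤ (∏ i, (X - C (M i i))).coeff (n-2) := by
  classical
  have hcp : M.charpoly = (charmatrix M).det := rfl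
  rw [hcp, Matrix.det_apply']
  rw [Polynomial.finset_sum_coeff]
  rw [← Finset.add_sum_erase _ _ (Finset.mem_univ (1 : Equiv.Perm (Fin n)))]
  have h1 : ((↑(Equiv.Perm.sign (1 : Equiv.Perm (Fin n))) : ℝ[X])
      * ∏ i, charmatrix M ((1 : Equiv.Perm (Fin n)) i) i).coeff (n-2)
      = (∏ i, (X - C (M i i))).coeff (n-2) := by
    simp only [Equiv.Perm.sign_one, Units.val_one, Int.cast_one, one_mul, Equiv.Perm.coe_one,
      id_eq, charmatrix_apply_eq]
  rw [h1]
  have h2 : ∑ σ ∈ (Finset.univ.erase (1 : Equiv.Perm (Fin n))),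
      ((↑(Equiv.Perm.sign σ) : ℝ[X]) * ∏ i, charmatrix M (σ i) i).coeff (n-2) ≤ 0 := by
    apply Finset.sum_nonpos
    intro σ hσ
    have hσ1 : σ ≠ 1 := Finset.ne_of_mem_erase hσ
    have hsupp : 1 < σ.support.card := Equiv.Perm.one_lt_card_support_of_ne_one hσ1
    rcases lt_or_ge 2 σ.support.card with hbig | hsmall
    · -- many moved points : coefficient vanishes
      have hfix : (Finset.univ.filter (fun i => σ i = i)).card ≤ n - 3 := by
        have hpart := Finset.card_filter_add_card_filter_not
          (s := (Finset.univ : Finset (Fin n))) (p := fun i => σ i = i)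
        have hsupp_eq : (Finset.univ.filter (fun i => ¬ σ i = i)) = σ.support := by
          ext i; simp [Equiv.Perm.mem_support]
        rw [hsupp_eq] at hpart
        simp only [Finset.card_univ, Fintype.card_fin] at hpart
        omega
      have hdeg : (∏ i, charmatrix M (σ i) i).natDegree ≤ n - 3 := by
        apply le_trans (Polynomial.natDegree_prod_le _ _)
        apply le_trans (b := (Finset.univ.filter (fun i => σ i = i)).card)
        · rw [Finset.card_eq_sum_ones, Finset.sum_filter]
          apply Finset.sum_le_sum
          intro i _
          exact charmatrix_apply_natDegree_le _ _
        · exact hfix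
      have hC : ((↑(Equiv.Perm.sign σ) : ℝ[X])).natDegree = 0 := by
        rw [← C_eq_intCast]; exact natDegree_C _
      have hdeg2 : ((↑(Equiv.Perm.sign σ) : ℝ[X]) * ∏ i, charmatrix M (σ i) i).natDegree < n-2 := by
        apply lt_of_le_of_lt (Polynomial.natDegree_mul_le)
        rw [hC, Nat.zero_add]
        omega
      rw [coeff_eq_zero_of_natDegree_lt hdeg2]
    · -- transposition
      have hswap : σ.IsSwap := Equiv.Perm.card_support_eq_two.mp (by omega)
      obtain ⟨x, y, hxy, rfl⟩ := hswap
      have hsign : Equiv.Perm.sign (Equiv.swap x y) = -1 := Equiv.Perm.sign_swap hxy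
      have hyx : y ≠ x := fun h => hxy h.symm
      have hxmem : x ∈ (Finset.univ : Finset (Fin n)) := Finset.mem_univ x
      have hymem : y ∈ Finset.univ.erase x := Finset.mem_erase.mpr ⟨hyx, Finset.mem_univ y⟩
      set s := (Finset.univ.erase x).erase y with hs
      have hprod : (∏ i, charmatrix M ((Equiv.swap x y) i) i)
          = charmatrix M ((Equiv.swap x y) x) x *
            (charmatrix M ((Equiv.swap x y) y) y
              * ∏ i ∈ s, charmatrix M ((Equiv.swap x y) i) i) := by
        rw [← Finset.mul_prod_erase _ _ hxmem, ← Finset.mul_prod_erase _ _ hymem]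
      have hsfix : ∀ i ∈ s, charmatrix M ((Equiv.swap x y) i) i = X - C (M i i) := by
        intro i hi
        obtain ⟨hiy, hi2⟩ := Finset.mem_erase.mp hi
        obtain ⟨hix, _⟩ := Finset.mem_erase.mp hi2
        rw [Equiv.swap_apply_of_ne_of_ne hix hiy, charmatrix_apply_eq]
      have hP : (∏ i ∈ s, charmatrix M ((Equiv.swap x y) i) i) = ∏ i ∈ s, (X - C (M i i)) :=
        Finset.prod_congr rfl hsfix
      have hPmon : (∏ i ∈ s, (X - C (M i i))).Monic :=
        monic_prod_of_monic _ _ (fun i _ => monic_X_sub_C _)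
      have hscard : s.card = n - 2 := by
        rw [hs, Finset.card_erase_of_mem hymem, Finset.card_erase_of_mem hxmem,
          Finset.card_univ, Fintype.card_fin]
        omega
      have hPdeg : (∏ i ∈ s, (X - C (M i i))).natDegree = n - 2 := by
        rw [Polynomial.natDegree_prod _ _ (fun i _ => X_sub_C_ne_zero _)]
        simp only [natDegree_X_sub_C]
        rw [Finset.card_eq_sum_ones] at hscard
        rw [hscard]
      have hxx : charmatrix M ((Equiv.swap x y) x) x = - C (M y x) := by
        rw [Equiv.swap_apply_left, charmatrix_apply_ne _ _ _ hyx]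
      have hyy : charmatrix M ((Equiv.swap x y) y) y = - C (M x y) := by
        rw [Equiv.swap_apply_right, charmatrix_apply_ne _ _ _ hxy]
      rw [hprod, hxx, hyy, hP]
      have hterm : ((↑(Equiv.Perm.sign (Equiv.swap x y)) : ℝ[X])
            * (- C (M y x) * (- C (M x y) * ∏ i ∈ s, (X - C (M i i)))))
          = C (- (M y x * M x y)) * ∏ i ∈ s, (X - C (M i i)) := by
        rw [hsign]
        simp only [Units.val_neg, Units.val_one, Int.cast_neg, Int.cast_one, C_neg, C_mul]
        ring
      rw [hterm, coeff_C_mul]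
      have hPcoeff : (∏ i ∈ s, (X - C (M i i))).coeff (n-2) = 1 := by
        have := hPmon.coeff_natDegree
        rwa [hPdeg] at this
      rw [hPcoeff, mul_one]
      have := mul_nonneg (hM y x) (hM x y)
      linarith
  linarith



theorem prod_Qp_facts {ι : Type*} [DecidableEq ι] (u v : ι → ℝ) (S : Finset ι) :
    (∏ i ∈ S, Qp (u i) (v i)).Monic ∧
    (∏ i ∈ S, Qp (u i) (v i)).natDegree = 2*S.card ∧
    (1 ≤ S.card → (∏ i ∈ S, Qp (u i) (v i)).coeff (2*S.card - 1) = ∑ i ∈ S, u i) ∧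
    (1 ≤ S.card → (∏ i ∈ S, Qp (u i) (v i)).coeff (2*S.card - 2)
      = ((∑ i ∈ S, u i)^2 - ∑ i ∈ S, (u i)^2)/2 + ∑ i ∈ S, v i) := by
  classical
  induction S using Finset.induction_on with
  | empty => exact ⟨by simp [monic_one], by simp, by simp, by simp⟩
  | @insert j S hj ih =>
    obtain ⟨ihm, ihd, ihc1, ihc2⟩ := ih
    have hprod : ∏ i ∈ insert j S, Qp (u i) (v i) = Qp (u j) (v j) * ∏ i ∈ S, Qp (u i) (v i) :=
      Finset.prod_insert hj
    have hm : (∏ i ∈ insert j S, Qp (u i) (v i)).Monic := by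
      rw [hprod]; exact (Qp_monic _ _).mul ihm
    have hcard : (insert j S).card = S.card + 1 := Finset.card_insert_of_notMem hj
    have hd : (∏ i ∈ insert j S, Qp (u i) (v i)).natDegree = 2*(insert j S).card := by
      rw [hprod, (Qp_monic _ _).natDegree_mul ihm, Qp_natDegree, ihd, hcard]
      ring
    have htopP : (∏ i ∈ S, Qp (u i) (v i)).coeff (2*S.card) = 1 := by
      have := ihm.coeff_natDegree
      rwa [ihd] at this
    have hhighP : (∏ i ∈ S, Qp (u i) (v i)).coeff (2*S.card + 1) = 0 :=
      coeff_eq_zero_of_natDegree_lt (by omega)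
    have hsU : ∑ i ∈ insert j S, u i = u j + ∑ i ∈ S, u i := Finset.sum_insert hj
    have hsU2 : ∑ i ∈ insert j S, (u i)^2 = (u j)^2 + ∑ i ∈ S, (u i)^2 := Finset.sum_insert hj
    have hsV : ∑ i ∈ insert j S, v i = v j + ∑ i ∈ S, v i := Finset.sum_insert hj
    refine ⟨hm, hd, ?_, ?_⟩
    · intro _
      rcases Nat.eq_zero_or_pos S.card with h0 | hpos
      · obtain rfl : S = ∅ := Finset.card_eq_zero.mp h0
        rw [hprod]
        simp [Qp_coeff_one]
      · rw [hprod, hcard, show 2*(S.card+1) - 1 = 2*S.card+1 from by omega, coeff_Qp_mul, hsU]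
        rw [if_pos (by omega), if_pos (by omega),
          show 2*S.card+1-2 = 2*S.card-1 from by omega,
          show 2*S.card+1-1 = 2*S.card from rfl,
          ihc1 hpos, htopP, hhighP]
        ring
    · intro _
      rcases Nat.eq_zero_or_pos S.card with h0 | hpos
      · obtain rfl : S = ∅ := Finset.card_eq_zero.mp h0
        rw [hprod]
        simp [Qp_coeff_zero]
      · rw [hprod, hcard, show 2*(S.card+1) - 2 = 2*S.card from by omega, coeff_Qp_mul,
          hsU, hsU2, hsV]
        rw [if_pos (by omega), if_pos (by omega),
          ihc2 hpos, ihc1 hpos, htopP]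
        ring

theorem prod_linear_facts {ι : Type*} [DecidableEq ι] (d : ι → ℝ) (S : Finset ι) :
    (∏ i ∈ S, (X - C (d i))).Monic ∧
    (∏ i ∈ S, (X - C (d i))).natDegree = S.card ∧
    (1 ≤ S.card → (∏ i ∈ S, (X - C (d i))).coeff (S.card - 1) = -∑ i ∈ S, d i) ∧
    (2 ≤ S.card → (∏ i ∈ S, (X - C (d i))).coeff (S.card - 2)
      = ((∑ i ∈ S, d i)^2 - ∑ i ∈ S, (d i)^2)/2) := by
  classical
  induction S using Finset.induction_on with
  | empty => exact ⟨by simp [monic_one], by simp, by simp, by simp⟩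
  | @insert j S hj ih =>
    obtain ⟨ihm, ihd, ihc1, ihc2⟩ := ih
    have hprod : ∏ i ∈ insert j S, (X - C (d i)) = (X - C (d j)) * ∏ i ∈ S, (X - C (d i)) :=
      Finset.prod_insert hj
    have hm : (∏ i ∈ insert j S, (X - C (d i))).Monic := by
      rw [hprod]; exact (monic_X_sub_C _).mul ihm
    have hcard : (insert j S).card = S.card + 1 := Finset.card_insert_of_notMem hj
    have hd' : (∏ i ∈ insert j S, (X - C (d i))).natDegree = (insert j S).card := by
      rw [hprod, (monic_X_sub_C _).natDegree_mul ihm, natDegree_X_sub_C, ihd, hcard]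
      omega
    have htopP : (∏ i ∈ S, (X - C (d i))).coeff (S.card) = 1 := by
      have := ihm.coeff_natDegree
      rwa [ihd] at this
    have hsD : ∑ i ∈ insert j S, d i = d j + ∑ i ∈ S, d i := Finset.sum_insert hj
    have hsD2 : ∑ i ∈ insert j S, (d i)^2 = (d j)^2 + ∑ i ∈ S, (d i)^2 := Finset.sum_insert hj
    refine ⟨hm, hd', ?_, ?_⟩
    · intro _
      rcases Nat.eq_zero_or_pos S.card with h0 | hpos
      · obtain rfl : S = ∅ := Finset.card_eq_zero.mp h0
        rw [hprod]
        simp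
      · rw [hprod, hcard, show S.card+1-1 = S.card from rfl, coeff_linear_mul, hsD]
        rw [if_pos (by omega), ihc1 hpos, htopP]
        ring
    · intro hc2
      rw [hcard] at hc2
      rw [hprod, hcard, show S.card+1-2 = S.card-1 from by omega, coeff_linear_mul, hsD, hsD2]
      rcases (by omega : S.card = 1 ∨ 2 ≤ S.card) with h1 | hbig
      · obtain ⟨i0, hi0⟩ := Finset.card_eq_one.mp h1
        subst hi0
        simp only [Finset.sum_singleton, Finset.prod_singleton]
        rw [h1]
        norm_num [coeff_sub, coeff_X_zero, coeff_C]
        ring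
      · rw [if_pos (by omega), show S.card-1-1 = S.card-2 from by omega,
          ihc2 hbig, ihc1 (by omega)]
        ring


lemma Qp_map_complex (a b : ℝ) :
    (Qp (-(2*a)) (a^2+b^2)).map (algebraMap ℝ ℂ)
      = (X - C ((a:ℂ) + (b:ℝ)*Complex.I)) * (X - C ((a:ℂ) - (b:ℝ)*Complex.I)) := by
  have h1 : ((a:ℂ) + (b:ℝ)*Complex.I) + ((a:ℂ) - (b:ℝ)*Complex.I) = ((2*a : ℝ) : ℂ) := by
    push_cast; ring
  have h2 : ((a:ℂ) + (b:ℝ)*Complex.I) * ((a:ℂ) - (b:ℝ)*Complex.I) = ((a^2+b^2 : ℝ) : ℂ) := by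
    have : ((a:ℂ) + (b:ℝ)*Complex.I) * ((a:ℂ) - (b:ℝ)*Complex.I)
        = (a:ℂ)^2 - ((b:ℝ):ℂ)^2 * Complex.I^2 := by ring
    rw [this, Complex.I_sq]
    push_cast; ring
  rw [Qp]
  simp only [Polynomial.map_add, Polynomial.map_mul, Polynomial.map_pow, Polynomial.map_X,
    Polynomial.map_C]
  have hC1 : (C ((algebraMap ℝ ℂ) (-(2*a))) : Polynomial ℂ)
      = - (C (((a:ℂ) + (b:ℝ)*Complex.I)) + C (((a:ℂ) - (b:ℝ)*Complex.I))) := by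
    rw [← C_add, h1]
    simp
  have hC2 : (C ((algebraMap ℝ ℂ) (a^2+b^2)) : Polynomial ℂ)
      = C (((a:ℂ) + (b:ℝ)*Complex.I)) * C (((a:ℂ) - (b:ℝ)*Complex.I)) := by
    rw [← C_mul, h2]
    simp
  rw [hC1, hC2]
  ring

lemma linear_map_complex (d : ℝ) :
    ((X - C d : Polynomial ℝ)).map (algebraMap ℝ ℂ) = X - C ((d:ℝ) : ℂ) := by
  simp

lemma Qp_comp_shift (α e b : ℝ) :
    (Qp (2*(α - e)) ((α - e)^2 + b^2)).comp (X - C α) = Qp (-(2*e)) (e^2 + b^2) := by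
  rw [Qp, Qp]
  simp only [add_comp, mul_comp, pow_comp, X_comp, C_comp]
  have e1 : (C (2*(α - e)) : Polynomial ℝ) = 2 * C α - 2 * C e := by
    rw [show (2*(α-e)) = α + α - (e + e) from by ring, C_sub, C_add, C_add]
    ring
  have e2 : (C ((α - e)^2 + b^2) : Polynomial ℝ) = (C α - C e)^2 + C b^2 := by
    rw [C_add, ← C_sub, ← C_pow, ← C_pow]
  have e3 : (C (-(2*e)) : Polynomial ℝ) = -(2 * C e) := by
    rw [show (-(2*e)) = -(e+e) from by ring, C_neg, C_add]
    ring
  have e4 : (C (e^2 + b^2) : Polynomial ℝ) = C e^2 + C b^2 := by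
    rw [C_add, ← C_pow, ← C_pow]
  rw [e1, e2, e3, e4]
  ring

lemma linear_comp_shift (Δ α : ℝ) :
    ((X - C Δ : Polynomial ℝ)).comp (X - C α) = X - C (Δ + α) := by
  simp only [sub_comp, X_comp, C_comp, C_add]
  ring



set_option maxHeartbeats 1000000 in
/-- General perturbation result for a realizable list of 2m+1 complex
numbers with Perron root δ and m conjugate pairs aᵢ ± ibᵢ: increasing δ by 2t and
replacing aₖ ± ibₖ with (aₖ - t) ± i(bₖ - t) preserves realizability. -/
theorem stmt_14 (m : ℕ) (hm : 1 ≤ m) (δ : ℝ) (hδ : 0 < δ)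
    (a b : Fin m → ℝ) (ha : ∀ i, a i ≤ 0)
    (hreal : ∃ A : Matrix (Fin (2 * m + 1)) (Fin (2 * m + 1)) ℝ,
      (∀ i j, 0 ≤ A i j) ∧
      (Matrix.charpoly A).map (algebraMap ℝ ℂ) =
        (X - C (δ : ℂ)) * ∏ i, ((X - C ((a i : ℂ) + (b i : ℝ) * Complex.I)) *
          (X - C ((a i : ℂ) - (b i : ℝ) * Complex.I))))
    (k : Fin m) (hbk : 0 ≤ b k) :
    ∀ t : ℝ, 0 ≤ t →
      ∃ A : Matrix (Fin (2 * m + 1)) (Fin (2 * m + 1)) ℝ,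
        (∀ i j, 0 ≤ A i j) ∧
        (Matrix.charpoly A).map (algebraMap ℝ ℂ) =
          (X - C ((δ + 2 * t : ℝ) : ℂ)) *
            ∏ i, ((X - C ((Function.update a k (a k - t) i : ℝ) +
                    (Function.update b k (b k - t) i : ℝ) * Complex.I)) *
                  (X - C ((Function.update a k (a k - t) i : ℝ) -
                    (Function.update b k (b k - t) i : ℝ) * Complex.I))) := by
  intro t ht
  obtain ⟨A, hA, hcp⟩ := hreal
  classical
  set a' : Fin m → ℝ := Function.update a k (a k - t) with ha'
  set b' : Fin m → ℝ := Function.update b k (b k - t) with hb'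
  -- Part 1 : real form of the hypothesis
  have hT₀map : ((X - C δ) * ∏ i, Qp (-(2*a i)) ((a i)^2 + (b i)^2)).map (algebraMap ℝ ℂ)
      = (X - C (δ : ℂ)) * ∏ i, ((X - C ((a i : ℂ) + (b i : ℝ) * Complex.I)) *
          (X - C ((a i : ℂ) - (b i : ℝ) * Complex.I))) := by
    rw [Polynomial.map_mul, Polynomial.map_prod]
    congr 1
    · exact linear_map_complex δ
    · exact Finset.prod_congr rfl (fun i _ => Qp_map_complex (a i) (b i))
  have hchar : A.charpoly = (X - C δ) * ∏ i, Qp (-(2*a i)) ((a i)^2 + (b i)^2) := by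
    apply Polynomial.map_injective (algebraMap ℝ ℂ) (RingHom.injective _)
    rw [hcp, hT₀map]
  -- numeric sums
  set SA := ∑ i, a i with hSA
  set SA2 := ∑ i, (a i)^2 with hSA2
  set SB2 := ∑ i, (b i)^2 with hSB2
  obtain ⟨hP₀m, hP₀d, hP₀c1, hP₀c2⟩ := prod_Qp_facts (fun i => -(2*a i))
    (fun i => (a i)^2 + (b i)^2) (Finset.univ : Finset (Fin m))
  have hcardm : (Finset.univ : Finset (Fin m)).card = m := by simp
  rw [hcardm] at hP₀d hP₀c1 hP₀c2
  have hsum_u : (∑ i, -(2*(a i))) = -(2*SA) := by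
    rw [hSA, Finset.mul_sum, ← Finset.sum_neg_distrib]
  have hsum_u2 : (∑ i, (-(2*(a i)))^2) = 4*SA2 := by
    rw [hSA2, Finset.mul_sum]
    exact Finset.sum_congr rfl (fun i _ => by ring)
  have hsum_v : (∑ i, ((a i)^2 + (b i)^2)) = SA2 + SB2 := by
    rw [hSA2, hSB2, ← Finset.sum_add_distrib]
  have htopP₀ : (∏ i, Qp (-(2*a i)) ((a i)^2 + (b i)^2)).coeff (2*m) = 1 := by
    have := hP₀m.coeff_natDegree
    rwa [hP₀d] at this
  -- trace
  have htrA : Matrix.trace A = δ + 2*SA := by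
    rw [Matrix.trace_eq_neg_charpoly_coeff, hchar]
    have hcard1 : Fintype.card (Fin (2*m+1)) - 1 = 2*m := by simp
    rw [hcard1, coeff_linear_mul]
    rcases Nat.eq_zero_or_pos (2*m) with h0 | hpos
    · omega
    · rw [if_pos (by omega), show 2*m - 1 = 2*m-1 from rfl, hP₀c1 hm, htopP₀, hsum_u]
      ring
  have htr_diag : Matrix.trace A = ∑ i, A i i := by
    simp [Matrix.trace, Matrix.diag]
  have hs₁ : 0 ≤ δ + 2*SA := by
    rw [← htrA, htr_diag]
    exact Finset.sum_nonneg (fun i _ => hA i i)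
  -- second coefficient of T₀
  have hT₀coeff2 : A.charpoly.coeff (2*m+1-2) = 2*SA^2 - SA2 + SB2 + 2*δ*SA := by
    rw [hchar, show (2*m+1-2) = 2*m-1 from by omega, coeff_linear_mul]
    rw [if_pos (by omega), show 2*m-1-1 = 2*m-2 from by omega, hP₀c2 hm, hP₀c1 hm,
      hsum_u, hsum_u2, hsum_v]
    ring
  -- JLL
  set SD2 := ∑ i, (A i i)^2 with hSD2
  obtain ⟨_, _, _, hDiag2⟩ := prod_linear_facts (fun i => A i i)
    (Finset.univ : Finset (Fin (2*m+1)))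
  have hcardn : (Finset.univ : Finset (Fin (2*m+1))).card = 2*m+1 := by simp
  rw [hcardn] at hDiag2
  have hEmat := charpoly_coeff_sub2_le A (by omega) hA
  rw [hT₀coeff2, hDiag2 (by omega)] at hEmat
  have hCS : (δ + 2*SA)^2 ≤ (2*m+1 : ℝ) * SD2 := by
    have h1 : (∑ i, A i i)^2 ≤ ((Finset.univ : Finset (Fin (2*m+1))).card : ℝ)
        * ∑ i, (A i i)^2 := sq_sum_le_card_mul_sum_sq
    rw [hcardn] at h1
    have h2 : (∑ i, A i i) = δ + 2*SA := by rw [← htr_diag, htrA]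
    rw [h2] at h1
    rw [hSD2]
    calc (δ + 2*SA)^2 ≤ ((2*m+1 : ℕ) : ℝ) * ∑ i, (A i i)^2 := h1
      _ = (2*m+1 : ℝ) * ∑ i, (A i i)^2 := by push_cast; ring
  have hE_le : 2*SA^2 - SA2 + SB2 + 2*δ*SA ≤ ((δ+2*SA)^2 - SD2)/2 := by
    have h2 : (∑ i, A i i) = δ + 2*SA := by rw [← htr_diag, htrA]
    rw [h2] at hEmat
    rw [hSD2]
    linarith [hEmat]
  -- perturbed sums
  have hupd_sum : ∀ g : Fin m → ℝ,
      ∑ i, Function.update g k (g k - t) i = (∑ i, g i) - t := by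
    intro g
    rw [Finset.sum_update_of_mem (Finset.mem_univ k), ← Finset.erase_eq]
    have h1 : ∑ x ∈ Finset.univ.erase k, g x + g k = ∑ i, g i :=
      Finset.sum_erase_add _ _ (Finset.mem_univ k)
    linarith
  have hupd_sum_sq : ∀ g : Fin m → ℝ,
      ∑ i, (Function.update g k (g k - t) i)^2 = (∑ i, (g i)^2) - (g k)^2 + (g k - t)^2 := by
    intro g
    have h1 : ∑ i, (Function.update g k (g k - t) i)^2
        = ∑ x ∈ Finset.univ.erase k, (Function.update g k (g k - t) x)^2
          + (Function.update g k (g k - t) k)^2 :=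
      (Finset.sum_erase_add _ _ (Finset.mem_univ k)).symm
    have h2 : ∀ x ∈ Finset.univ.erase k, (Function.update g k (g k - t) x)^2 = (g x)^2 := by
      intro x hx
      rw [Function.update_of_ne (Finset.ne_of_mem_erase hx)]
    have h3 : ∑ x ∈ Finset.univ.erase k, (g x)^2 + (g k)^2 = ∑ i, (g i)^2 :=
      Finset.sum_erase_add _ _ (Finset.mem_univ k)
    rw [h1, Finset.sum_congr rfl h2, Function.update_self]
    linarith
  have hSA' : ∑ i, a' i = SA - t := by rw [ha', hSA]; exact hupd_sum a
  have hSA'2 : ∑ i, (a' i)^2 = SA2 - (a k)^2 + (a k - t)^2 := by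
    rw [ha', hSA2]; exact hupd_sum_sq a
  have hSB'2 : ∑ i, (b' i)^2 = SB2 - (b k)^2 + (b k - t)^2 := by
    rw [hb', hSB2]; exact hupd_sum_sq b
  have ha'k : ∀ i, a' i ≤ 0 := by
    intro i
    rw [ha']
    rcases eq_or_ne i k with rfl | hik
    · rw [Function.update_self]; linarith [ha i]
    · rw [Function.update_of_ne hik]; exact ha i
  -- α and the shifted data
  set nr : ℝ := (2*m+1 : ℝ) with hnr
  have hnr0 : (0:ℝ) < nr := by rw [hnr]; positivity
  set α : ℝ := (δ + 2*SA) / nr with hα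
  have hα0 : 0 ≤ α := div_nonneg hs₁ hnr0.le
  have hαs : nr * α = δ + 2*SA := by
    rw [hα]; field_simp
  set c : Fin m → ℝ := fun i => α - a' i with hc
  have hc0 : ∀ i, 0 ≤ c i := by
    intro i
    rw [hc]
    simp only
    linarith [ha'k i]
  set Δ : ℝ := δ + 2*t - α with hΔ
  have hsumc : ∑ i, c i = (m : ℝ) * α - (SA - t) := by
    rw [hc]
    simp only
    rw [Finset.sum_sub_distrib, Finset.sum_const, hSA', Finset.card_univ, Fintype.card_fin,
      nsmul_eq_mul]
  have hΔkey : Δ = 2 * ∑ i, c i := by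
    rw [hΔ, hsumc]
    have : nr = 2*(m:ℝ)+1 := by rw [hnr]
    rw [this] at hαs
    linarith
  have hΔ0 : 0 ≤ Δ := by
    rw [hΔkey]
    have : 0 ≤ ∑ i, c i := Finset.sum_nonneg (fun i _ => hc0 i)
    linarith
  have hsumc2 : ∑ i, (c i)^2 = (m:ℝ)*α^2 - 2*α*(SA - t) + (SA2 - (a k)^2 + (a k - t)^2) := by
    rw [hc]
    simp only
    have : ∀ i : Fin m, (α - a' i)^2 = α^2 - 2*α*(a' i) + (a' i)^2 := fun i => by ring
    rw [Finset.sum_congr rfl (fun i _ => this i)]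
    rw [Finset.sum_add_distrib, Finset.sum_sub_distrib, Finset.sum_const, ← Finset.mul_sum,
      hSA', hSA'2, Finset.card_univ, Fintype.card_fin, nsmul_eq_mul]
  -- the budget inequality
  have hbudget : ∑ i, (b' i)^2 ≤ 2*Δ*(∑ i, c i) - 2*(∑ i, c i)^2 + ∑ i, (c i)^2 := by
    have hmono0 : 0 ≤ δ + t + b k - a k := by
      have := ha k
      linarith
    have hmono : 0 ≤ 4*t*(δ + t + b k - a k) := by
      have h4t : 0 ≤ 4*t := by linarith
      exact mul_nonneg h4t hmono0
    have hnrm : (m:ℝ) = (nr - 1)/2 := by rw [hnr]; ring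
    have key : nr * (Δ^2 + 2*(∑ i, (c i)^2) - 2*(∑ i, (b' i)^2))
        = nr*((δ+2*t)^2 + 2*(SA2 - (a k)^2 + (a k - t)^2)
            - 2*(SB2 - (b k)^2 + (b k - t)^2)) - (δ+2*SA)^2 := by
      rw [hsumc2, hSB'2, hΔ, hnrm, hα]
      field_simp
      ring
    have hs2mono : (δ+2*t)^2 + 2*(SA2 - (a k)^2 + (a k - t)^2)
        - 2*(SB2 - (b k)^2 + (b k - t)^2)
        = (δ^2 + 2*SA2 - 2*SB2) + 4*t*(δ + t + b k - a k) := by ring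
    have hs2SD : SD2 ≤ δ^2 + 2*SA2 - 2*SB2 := by
      have hid : δ^2 + 2*SA2 - 2*SB2
          = (δ+2*SA)^2 - 2*(2*SA^2 - SA2 + SB2 + 2*δ*SA) := by ring
      rw [hid]
      linarith [hE_le]
    have hs2ineq : (δ+2*SA)^2 ≤ nr * (δ^2 + 2*SA2 - 2*SB2) := by
      calc (δ+2*SA)^2 ≤ nr * SD2 := hCS
        _ ≤ nr * (δ^2 + 2*SA2 - 2*SB2) := mul_le_mul_of_nonneg_left hs2SD hnr0.le
    have hfinal : 0 ≤ Δ^2 + 2*(∑ i, (c i)^2) - 2*(∑ i, (b' i)^2) := by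
      have h2 : 0 ≤ nr * (Δ^2 + 2*(∑ i, (c i)^2) - 2*(∑ i, (b' i)^2)) := by
        rw [key, hs2mono]
        have hexp : nr * ((δ^2 + 2*SA2 - 2*SB2) + 4*t*(δ + t + b k - a k))
            = nr * (δ^2 + 2*SA2 - 2*SB2) + nr * (4*t*(δ + t + b k - a k)) := by ring
        rw [hexp]
        have h3 : 0 ≤ nr * (4*t*(δ + t + b k - a k)) := mul_nonneg hnr0.le hmono
        linarith [hs2ineq, h3]
      by_contra hneg
      push_neg at hneg
      have := mul_neg_of_pos_of_neg hnr0 hneg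
      linarith
    rw [hΔkey] at hfinal ⊢
    linarith [hfinal]
  -- multiset and ordering
  set s : Multiset (ℝ × ℝ) :=
    Multiset.map (fun i => (c i, (b' i)^2)) (Finset.univ : Finset (Fin m)).val with hs
  have hMσs : Mσ s = ∑ i, c i := by
    rw [hs, Mσ, Multiset.map_map]
    rfl
  have hMWs : MW s = ∑ i, (b' i)^2 := by
    rw [hs, MW, Multiset.map_map]
    rfl
  have hMC2s : MC2 s = ∑ i, (c i)^2 := by
    rw [hs, MC2, Multiset.map_map]
    rfl
  have hposs : ∀ x ∈ s, 0 ≤ x.1 ∧ 0 ≤ x.2 := by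
    intro x hx
    rw [hs] at hx
    obtain ⟨i, _, rfl⟩ := Multiset.mem_map.mp hx
    exact ⟨hc0 i, by positivity⟩
  have hbuds : MW s ≤ MF Δ s := by
    rw [hMWs, MF, hMσs, hMC2s]
    exact hbudget
  obtain ⟨l, hl, hcondsl⟩ := ordering_exists Δ s hposs hbuds
  have hlen : l.length = m := by
    have h1 : Multiset.card (↑l : Multiset (ℝ×ℝ)) = Multiset.card s := by rw [hl]
    rw [Multiset.coe_card, hs, Multiset.card_map] at h1
    simpa using h1
  have hlne : l ≠ [] := by
    intro h0
    rw [h0] at hlen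
    simp at hlen
    omega
  have hposl : ∀ x ∈ l, 0 ≤ x.1 ∧ 0 ≤ x.2 := by
    intro x hx
    exact hposs x (by rw [← hl]; exact hx)
  have hMσl : Mσ ↑l = ∑ i, c i := by rw [hl, hMσs]
  have hσΔl : 2 * Mσ ↑l ≤ Δ := by rw [hMσl, ← hΔkey]
  obtain ⟨hGm, hGd, hGnn, hGrat, _, _⟩ := core_lemma Δ hΔ0 l hlne hposl hσΔl hcondsl
  rw [hlen] at hGd hGrat
  -- the realizing polynomial
  set h : Polynomial ℝ := (X - C Δ) * Gq l with hhdef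
  have hhm : h.Monic := by
    rw [hhdef]; exact (monic_X_sub_C Δ).mul hGm
  have hhd : h.natDegree = 2*m+1 := by
    rw [hhdef, (monic_X_sub_C Δ).natDegree_mul hGm, natDegree_X_sub_C, hGd]
    omega
  have hhcoeff : ∀ j, j < 2*m+1 → h.coeff j ≤ 0 := by
    intro j hj
    rw [hhdef, coeff_linear_mul]
    rcases Nat.eq_zero_or_pos j with rfl | hj1
    · rw [if_neg (by omega)]
      have h1 := hGnn 0
      have h2 : 0 ≤ Δ * (Gq l).coeff 0 := mul_nonneg hΔ0 h1
      linarith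
    · rw [if_pos (by omega)]
      have := hGrat j hj1 (by omega)
      linarith
  -- the realizing matrix
  set B : Matrix (Fin (2*m+1)) (Fin (2*m+1)) ℝ :=
    α • (1 : Matrix (Fin (2*m+1)) (Fin (2*m+1)) ℝ) + companion (2*m+1) h with hB
  refine ⟨B, ?_, ?_⟩
  · -- nonnegativity
    intro i j
    rw [hB]
    have h1 : (α • (1 : Matrix (Fin (2*m+1)) (Fin (2*m+1)) ℝ) + companion (2*m+1) h) i j
        = α * (1 : Matrix (Fin (2*m+1)) (Fin (2*m+1)) ℝ) i j + companion (2*m+1) h i j := by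
      simp [Matrix.add_apply]
    rw [h1]
    have h2 := companion_nonneg h hhcoeff i j
    rcases eq_or_ne i j with rfl | hij
    · rw [Matrix.one_apply_eq]
      have : 0 ≤ α * 1 := by linarith
      linarith
    · rw [Matrix.one_apply_ne hij]
      have : α * 0 = 0 := by ring
      linarith
  · -- the characteristic polynomial
    have hcpB : B.charpoly = h.comp (X - C α) := by
      rw [hB, charpoly_smul_one_add, charpoly_companion h (by omega) hhm hhd]
    -- product over list = product over Fin m
    have hGprod : Gq l = ∏ i, Qp (2*(c i)) ((c i)^2 + (b' i)^2) := by
      rw [Gq]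
      have h1 : ((l.map fun p => Qp (2*p.1) (p.1^2 + p.2)).prod : Polynomial ℝ)
          = ((↑l : Multiset (ℝ×ℝ)).map fun p => Qp (2*p.1) (p.1^2 + p.2)).prod := by
        rfl
      rw [h1, hl, hs, Multiset.map_map]
      rfl
    have hcomp : h.comp (X - C α)
        = (X - C (δ + 2*t)) * ∏ i, Qp (-(2*(a' i))) ((a' i)^2 + (b' i)^2) := by
      rw [hhdef, mul_comp]
      congr 1
      · rw [linear_comp_shift]
        congr 1
        rw [hΔ]
        ring
      · rw [hGprod]
        rw [← aeval_eq_comp, map_prod]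
        apply Finset.prod_congr rfl
        intro i _
        rw [aeval_eq_comp]
        have : c i = α - a' i := by rw [hc]
        rw [this]
        exact Qp_comp_shift α (a' i) (b' i)
    rw [hcpB, hcomp, Polynomial.map_mul, Polynomial.map_prod]
    congr 1
    · exact linear_map_complex (δ + 2*t)
    · exact Finset.prod_congr rfl (fun i _ => Qp_map_complex (a' i) (b' i))

end LaffeyAux
end

section
/- Let a₁, a₂, b₁, b₂ be real numbers and set δ = −2(a₁+a₂). If the list (δ, a₁+ib₁, a₁−ib₁, a₂+ib₂, a₂−ib₂) is realizable, then b₁² + b₂² ≤ 3a₁² + 3a₂² + 4a₁a₂. -/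
open Matrix Polynomial


lemma my_eval_charpoly {n R : Type*} [Fintype n] [DecidableEq n] [CommRing R]
    (M : Matrix n n R) (z : R) :
    (Matrix.charpoly M).eval z = (z • (1 : Matrix n n R) - M).det := by
  rw [Matrix.charpoly, ← Polynomial.coe_evalRingHom, RingHom.map_det]
  congr 1
  ext i j
  by_cases h : i = j
  · subst h; simp [Matrix.charmatrix_apply_eq, Matrix.one_apply]
  · simp [Matrix.charmatrix_apply_ne _ _ _ h, Matrix.one_apply, h]

lemma my_trace_sq {n : ℕ} (B : Matrix (Fin n) (Fin n) ℂ) (g : Fin n → ℂ)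
    (h : B.charpoly = ∏ i, (X - C (g i))) :
    (B * B).trace = ∑ i, (g i) ^ 2 := by
  have hc : (B * B).charpoly = ∏ i, (X - C (g i ^ 2)) := by
    apply Polynomial.funext
    intro z
    obtain ⟨w, hw⟩ := IsAlgClosed.exists_pow_nat_eq z (n := 2) (by norm_num)
    have key : z • (1 : Matrix (Fin n) (Fin n) ℂ) - B * B
        = (w • 1 - B) * (w • 1 + B) := by
      have hcomm : B * (w • (1 : Matrix (Fin n) (Fin n) ℂ)) = w • B := by
        rw [mul_smul_comm, mul_one]
      rw [sub_mul, mul_add, mul_add, hcomm, smul_mul_assoc, one_mul, smul_mul_assoc,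
        smul_smul, one_mul, ← hw, pow_two]
      abel
    rw [my_eval_charpoly, key, Matrix.det_mul]
    have h1 : (w • (1 : Matrix (Fin n) (Fin n) ℂ) - B).det = ∏ i, (w - g i) := by
      rw [← my_eval_charpoly, h]; simp [eval_prod]
    have h2 : (w • (1 : Matrix (Fin n) (Fin n) ℂ) + B).det = ∏ i, (w + g i) := by
      have : w • (1 : Matrix (Fin n) (Fin n) ℂ) + B = (-1 : ℂ) • ((-w) • 1 - B) := by
        simp [smul_smul]; abel
      rw [this, Matrix.det_smul, ← my_eval_charpoly, h]
      simp only [eval_prod, eval_sub, eval_X, eval_C, Fintype.card_fin]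
      rw [show ((-1 : ℂ)) ^ n = ∏ _i : Fin n, (-1 : ℂ) by simp, ← Finset.prod_mul_distrib]
      congr 1; ext i; ring
    rw [h1, h2, ← Finset.prod_mul_distrib, eval_prod]
    congr 1; ext i
    simp only [eval_sub, eval_X, eval_C, ← hw]; ring
  rw [Matrix.trace_eq_sum_roots_charpoly, hc]
  have : ∏ i, (X - C (g i ^ 2))
      = ((Finset.univ.val.map fun i => g i ^ 2).map fun a => X - C a).prod := by
    rw [Multiset.map_map]; rfl
  rw [this, Polynomial.roots_multiset_prod_X_sub_C]
  rfl

/-- A list of n complex numbers is realizable if it is the spectrum of an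
entrywise nonnegative real matrix. -/
def Realizable {n : ℕ} (δ : Fin n → ℂ) : Prop :=
  ∃ A : Matrix (Fin n) (Fin n) ℝ, (∀ i j, 0 ≤ A i j) ∧
    (Matrix.charpoly A).map (algebraMap ℝ ℂ) = ∏ i, (X - C (δ i))

/-- Bound on b₁² + b₂² for a realizable trace-zero list with two
conjugate pairs. -/
theorem stmt_15 (a₁ a₂ b₁ b₂ δ : ℝ) (hδ : δ = -2 * (a₁ + a₂))
    (hreal : Realizable ![(δ : ℂ),
      (a₁ : ℂ) + b₁ * Complex.I, (a₁ : ℂ) - b₁ * Complex.I,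
      (a₂ : ℂ) + b₂ * Complex.I, (a₂ : ℂ) - b₂ * Complex.I]) :
    b₁ ^ 2 + b₂ ^ 2 ≤ 3 * a₁ ^ 2 + 3 * a₂ ^ 2 + 4 * a₁ * a₂ := by
  obtain ⟨A, hA, hcp⟩ := hreal
  have hB : (A.map (algebraMap ℝ ℂ)).charpoly = ∏ i, (X - C
      (![(δ : ℂ), (a₁ : ℂ) + b₁ * Complex.I, (a₁ : ℂ) - b₁ * Complex.I,
        (a₂ : ℂ) + b₂ * Complex.I, (a₂ : ℂ) - b₂ * Complex.I] i)) := by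
    rw [Matrix.charpoly_map]; exact hcp
  have htr := my_trace_sq _ _ hB
  have hmap : A.map (algebraMap ℝ ℂ) * A.map (algebraMap ℝ ℂ)
      = (A * A).map (algebraMap ℝ ℂ) := by
    rw [Matrix.map_mul]
  have htrace : ((A * A).map (algebraMap ℝ ℂ)).trace = ((A * A).trace : ℂ) := by
    simp [Matrix.trace, Matrix.diag, Matrix.map_apply]
  have key : ((A * A).trace : ℂ)
      = ((δ ^ 2 + 2 * a₁ ^ 2 - 2 * b₁ ^ 2 + 2 * a₂ ^ 2 - 2 * b₂ ^ 2 : ℝ) : ℂ) := by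
    rw [← htrace, ← hmap, htr]
    simp only [Fin.sum_univ_five, Matrix.cons_val_zero, Matrix.cons_val_one, Matrix.head_cons,
      Matrix.cons_val_two, Matrix.tail_cons, Matrix.cons_val_three, Matrix.cons_val_four]
    push_cast
    ring_nf
    simp [Complex.I_sq]
    ring
  have key' : (A * A).trace = δ ^ 2 + 2 * a₁ ^ 2 - 2 * b₁ ^ 2 + 2 * a₂ ^ 2 - 2 * b₂ ^ 2 := by
    exact_mod_cast key
  have hpos : 0 ≤ (A * A).trace := by
    apply Finset.sum_nonneg
    intro i _
    rw [Matrix.diag_apply, Matrix.mul_apply]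
    exact Finset.sum_nonneg fun j _ => mul_nonneg (hA i j) (hA j i)
  subst hδ
  rw [key'] at hpos
  clear key key' htr hB hcp hmap htrace hA
  nlinarith [hpos]
end

section
/- Let δ, a₁, a₂, a₃, b₃ be real numbers. If the list Δ = (δ, a₁, a₂, a₃+ib₃, a₃−ib₃) is realizable, then b₃² ≤ (δ² + a₁² + a₂² + 2a₃²)/2 and b₃² ≤ (4(δ² + a₁² + a₂²) + 6a₃² − 2(δa₁ + δa₂ + a₁a₂) − 4a₃(δ + a₁ + a₂))/10. -/
open Matrix Polynomial

section Aux

variable {n : Type*} [Fintype n] [DecidableEq n] {R : Type*} [CommRing R]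

lemma aux_charmatrix_mul_self (M : Matrix n n R) :
    (charmatrix (M * M)).map (Polynomial.expand R 2) =
      charmatrix M * (Matrix.scalar n (X : R[X]) + M.map C) := by
  have hc : Commute (Matrix.scalar n (X : R[X])) (M.map C) :=
    scalar_commute _ (fun r' => Commute.all _ _) _
  have key : (Matrix.scalar n (X : R[X]) - M.map C) * (Matrix.scalar n X + M.map C)
      = Matrix.scalar n (X ^ 2) - (M.map C) * (M.map C) := by
    rw [sub_mul, mul_add, mul_add, hc.eq]
    have h2 : Matrix.scalar n (X : R[X]) * Matrix.scalar n X = Matrix.scalar n (X ^ 2) := by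
      rw [← _root_.map_mul, sq]
    rw [h2]; abel
  have hch : charmatrix M = Matrix.scalar n (X : R[X]) - M.map C := rfl
  have h1 : (charmatrix (M * M)).map (Polynomial.expand R 2) =
      Matrix.scalar n ((X : R[X]) ^ 2) - (M * M).map C := by
    ext i j
    by_cases h : i = j
    · subst h
      simp [charmatrix_apply_eq, scalar_apply, Matrix.map_apply, diagonal_apply_eq,
        Matrix.mul_apply, map_sum, _root_.map_mul]
    · simp [charmatrix_apply_ne _ _ _ h, scalar_apply, Matrix.map_apply, diagonal_apply_ne _ h,
        Matrix.mul_apply, map_sum, _root_.map_mul]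
  rw [h1, Matrix.map_mul, ← key, hch]

lemma aux_charmatrix_neg (M : Matrix n n R) :
    (charmatrix M).map (Polynomial.aeval (-X : R[X])) =
      -(Matrix.scalar n (X : R[X]) + M.map C) := by
  ext i j
  by_cases h : i = j
  · subst h
    simp [charmatrix_apply_eq, scalar_apply, Matrix.map_apply, diagonal_apply_eq,
      Polynomial.algebraMap_eq]
    ring
  · simp [charmatrix_apply_ne _ _ _ h, scalar_apply, Matrix.map_apply, diagonal_apply_ne _ h,
      Polynomial.algebraMap_eq]

lemma aux_charpoly_mul_self (M : Matrix n n R) :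
    Polynomial.expand R 2 ((M * M).charpoly) =
      (-1) ^ (Fintype.card n) * M.charpoly * M.charpoly.comp (-X) := by
  have h1 : Polynomial.expand R 2 ((M * M).charpoly) =
      M.charpoly * (Matrix.scalar n (X : R[X]) + M.map C).det := by
    rw [Matrix.charpoly, Matrix.charpoly, ← Matrix.det_mul, ← aux_charmatrix_mul_self]
    exact RingHom.map_det (Polynomial.expand R 2).toRingHom _
  have h2 : M.charpoly.comp (-X) =
      (-1) ^ (Fintype.card n) * (Matrix.scalar n (X : R[X]) + M.map C).det := by
    have := RingHom.map_det (Polynomial.aeval (-X : R[X])).toRingHom (charmatrix M)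
    rw [Matrix.charpoly, Polynomial.comp_eq_aeval]
    rw [show ((Polynomial.aeval (-X : R[X])) (charmatrix M).det) =
      ((charmatrix M).map (Polynomial.aeval (-X : R[X]))).det from this]
    rw [aux_charmatrix_neg, Matrix.det_neg]
  rw [h1, h2]
  ring_nf
  rw [mul_comm (Fintype.card n) 2, pow_mul, neg_one_sq, one_pow]
  ring

lemma aux_charpoly_sq_of_roots (δf : Fin 5 → ℂ) (B : Matrix (Fin 5) (Fin 5) ℂ)
    (h : B.charpoly = ∏ i, (X - C (δf i))) :
    (B * B).charpoly = ∏ i, (X - C (δf i ^ 2)) := by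
  apply Polynomial.expand_injective (n := 2) two_pos
  rw [aux_charpoly_mul_self, h, map_prod]
  have hcard : Fintype.card (Fin 5) = 5 := by simp
  rw [hcard]
  have hcomp : (∏ i, ((X : ℂ[X]) - C (δf i))).comp (-X) = ∏ i, (-X - C (δf i)) := by
    rw [Polynomial.prod_comp]
    simp [sub_comp]
  rw [hcomp]
  simp only [map_sub, Polynomial.expand_X, Polynomial.expand_C]
  have h2 : ∀ i : Fin 5, (-(X : ℂ[X]) - C (δf i)) = (-1) * (X + C (δf i)) := fun i => by ring
  simp only [h2]
  rw [Finset.prod_mul_distrib, Finset.prod_const]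
  have h3 : ∀ i : Fin 5, ((X : ℂ[X]) ^ 2 - C (δf i ^ 2)) = (X - C (δf i)) * (X + C (δf i)) := by
    intro i; rw [map_pow]; ring
  rw [Finset.prod_congr rfl fun i _ => h3 i, Finset.prod_mul_distrib]
  norm_num

lemma aux_trace_of_roots (δf : Fin 5 → ℂ) (B : Matrix (Fin 5) (Fin 5) ℂ)
    (h : B.charpoly = ∏ i, (X - C (δf i))) :
    Matrix.trace B = ∑ i, δf i := by
  rw [Matrix.trace_eq_neg_charpoly_coeff, h]
  have := Polynomial.prod_X_sub_C_coeff_card_pred (Finset.univ : Finset (Fin 5)) δf (by simp)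
  simp only [Finset.card_univ, Fintype.card_fin] at this ⊢
  rw [this, neg_neg]

end Aux

/-- Bounds on b₃² for a realizable list of five complex numbers with
three reals and one conjugate pair. -/
theorem stmt_17 (δ a₁ a₂ a₃ b₃ : ℝ)
    (hreal : Realizable ![(δ : ℂ), (a₁ : ℂ), (a₂ : ℂ),
      (a₃ : ℂ) + b₃ * Complex.I, (a₃ : ℂ) - b₃ * Complex.I]) :
    b₃ ^ 2 ≤ (δ ^ 2 + a₁ ^ 2 + a₂ ^ 2 + 2 * a₃ ^ 2) / 2 ∧
    b₃ ^ 2 ≤ (4 * (δ ^ 2 + a₁ ^ 2 + a₂ ^ 2) + 6 * a₃ ^ 2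
      - 2 * (δ * a₁ + δ * a₂ + a₁ * a₂) - 4 * a₃ * (δ + a₁ + a₂)) / 10 := by
  obtain ⟨A, hA, hcp⟩ := hreal
  set δf : Fin 5 → ℂ := ![(δ : ℂ), (a₁ : ℂ), (a₂ : ℂ),
      (a₃ : ℂ) + b₃ * Complex.I, (a₃ : ℂ) - b₃ * Complex.I] with hδf
  set B : Matrix (Fin 5) (Fin 5) ℂ := A.map (algebraMap ℝ ℂ) with hBdef
  have hB : B.charpoly = ∏ i, (X - C (δf i)) := by
    rw [hBdef, Matrix.charpoly_map]; exact hcp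
  have hBB := aux_charpoly_sq_of_roots δf B hB
  have htr1 : Matrix.trace B = ∑ i, δf i := aux_trace_of_roots δf B hB
  have htr2 : Matrix.trace (B * B) = ∑ i, δf i ^ 2 :=
    aux_trace_of_roots (fun i => δf i ^ 2) (B * B) hBB
  have hre1 : Matrix.trace B = ((Matrix.trace A : ℝ) : ℂ) := by
    simp [Matrix.trace, hBdef, Matrix.map_apply, Matrix.diag]
  have hre2 : Matrix.trace (B * B) = ((Matrix.trace (A * A) : ℝ) : ℂ) := by
    rw [hBdef, ← Matrix.map_mul]
    simp [Matrix.trace, Matrix.map_apply, Matrix.diag]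
  have hs1 : ∑ i, δf i = ((δ + a₁ + a₂ + 2 * a₃ : ℝ) : ℂ) := by
    simp only [hδf, Fin.sum_univ_five]
    simp [Matrix.cons_val_zero, Matrix.cons_val_one]
    ring
  have hs2 : ∑ i, δf i ^ 2 = ((δ ^ 2 + a₁ ^ 2 + a₂ ^ 2 + 2 * a₃ ^ 2 - 2 * b₃ ^ 2 : ℝ) : ℂ) := by
    simp only [hδf, Fin.sum_univ_five]
    simp [Matrix.cons_val_zero, Matrix.cons_val_one]
    ring_nf
    rw [Complex.I_sq]
    ring
  have ht1 : Matrix.trace A = δ + a₁ + a₂ + 2 * a₃ :=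
    Complex.ofReal_inj.mp (by rw [← hre1, htr1, hs1])
  have ht2 : Matrix.trace (A * A) = δ ^ 2 + a₁ ^ 2 + a₂ ^ 2 + 2 * a₃ ^ 2 - 2 * b₃ ^ 2 :=
    Complex.ofReal_inj.mp (by rw [← hre2, htr2, hs2])
  have hd : Matrix.trace (A * A) = ∑ i, ∑ j, A i j * A j i := by
    simp [Matrix.trace, Matrix.mul_apply, Matrix.diag]
  have h5 : ∑ i, (A i i) ^ 2 ≤ Matrix.trace (A * A) := by
    rw [hd]
    apply Finset.sum_le_sum
    intro i _
    have h := Finset.single_le_sum (f := fun j => A i j * A j i)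
      (fun j _ => mul_nonneg (hA i j) (hA j i)) (Finset.mem_univ i)
    calc (A i i) ^ 2 = A i i * A i i := sq (A i i)
      _ ≤ ∑ j, A i j * A j i := h
  have h0 : (0 : ℝ) ≤ Matrix.trace (A * A) := by
    rw [hd]
    refine Finset.sum_nonneg fun i _ => Finset.sum_nonneg fun j _ =>
      mul_nonneg (hA i j) (hA j i)
  have h6 : (Matrix.trace A) ^ 2 ≤ 5 * ∑ i, (A i i) ^ 2 := by
    have h := sq_sum_le_card_mul_sum_sq
      (s := (Finset.univ : Finset (Fin 5))) (f := fun i => A i i)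
    have htr : Matrix.trace A = ∑ i, A i i := by simp [Matrix.trace, Matrix.diag]
    rw [htr]
    simpa using h
  have h7 : A.trace ^ 2 ≤ 5 * Matrix.trace (A * A) :=
    h6.trans (mul_le_mul_of_nonneg_left h5 (by norm_num))
  rw [ht1, ht2] at h7
  rw [ht2] at h0
  constructor
  · linarith [h0]
  · linarith [h7]
end

section
/- Let a ≥ 0 and d be real numbers. The list (a, −a, id, −id) of four complex numbers is realizable if and only if |d| ≤ a. -/
open Matrix Polynomial

set_option maxHeartbeats 1000000 in
theorem my_det_fin_four {R : Type*} [CommRing R] (M : Matrix (Fin 4) (Fin 4) R) :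
    M.det =
      M 0 0 * (M 1 1 * (M 2 2 * M 3 3 - M 2 3 * M 3 2) -
        M 1 2 * (M 2 1 * M 3 3 - M 2 3 * M 3 1) +
        M 1 3 * (M 2 1 * M 3 2 - M 2 2 * M 3 1)) -
      M 0 1 * (M 1 0 * (M 2 2 * M 3 3 - M 2 3 * M 3 2) -
        M 1 2 * (M 2 0 * M 3 3 - M 2 3 * M 3 0) +
        M 1 3 * (M 2 0 * M 3 2 - M 2 2 * M 3 0)) +
      M 0 2 * (M 1 0 * (M 2 1 * M 3 3 - M 2 3 * M 3 1) -
        M 1 1 * (M 2 0 * M 3 3 - M 2 3 * M 3 0) +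
        M 1 3 * (M 2 0 * M 3 1 - M 2 1 * M 3 0)) -
      M 0 3 * (M 1 0 * (M 2 1 * M 3 2 - M 2 2 * M 3 1) -
        M 1 1 * (M 2 0 * M 3 2 - M 2 2 * M 3 0) +
        M 1 2 * (M 2 0 * M 3 1 - M 2 1 * M 3 0)) := by
  rw [Matrix.det_succ_row_zero, Fin.sum_univ_four]
  simp [Matrix.det_fin_three, Matrix.submatrix_apply, Fin.succAbove_zero,
    show Fin.succAbove (1:Fin 4) (2:Fin 3) = 3 by decide, show Fin.succAbove (2:Fin 4) (1:Fin 3) = 1 by decide,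
    show Fin.succAbove (2:Fin 4) (2:Fin 3) = 3 by decide, show Fin.succAbove (3:Fin 4) (1:Fin 3) = 1 by decide,
    show Fin.succAbove (3:Fin 4) (2:Fin 3) = 2 by decide]
  ring

set_option maxHeartbeats 2000000 in
theorem my_charpoly_circ (x z : ℝ) :
    Matrix.charpoly !![0, x, 0, z; z, 0, x, 0; 0, z, 0, x; x, 0, z, 0] =
      X^4 + ((C x - C z)^2 - (C x + C z)^2) * X^2 - (C x + C z)^2 * (C x - C z)^2 := by
  have hcm : charmatrix !![0, x, 0, z; z, 0, x, 0; 0, z, 0, x; x, 0, z, 0] =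
      !![X, -C x, 0, -C z; -C z, X, -C x, 0; 0, -C z, X, -C x; -C x, 0, -C z, X] := by
    ext i j
    fin_cases i <;> fin_cases j <;>
      simp [charmatrix_apply, Matrix.diagonal]
  rw [Matrix.charpoly, hcm, my_det_fin_four]
  simp only [Matrix.of_apply, Matrix.cons_val', Matrix.cons_val_zero, Matrix.cons_val_one,
    Matrix.head_cons, Matrix.empty_val', Matrix.cons_val_fin_one, Matrix.head_fin_const,
    show ((2:Fin 4)) = (1:Fin 3).succ from rfl, show ((3:Fin 4)) = (2:Fin 3).succ from rfl,
    show ((2:Fin 3)) = (1:Fin 2).succ from rfl,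
    Matrix.cons_val_succ, map_add, map_sub, map_neg, _root_.map_mul, map_pow, map_ofNat]
  ring

theorem my_prod_eq (a d : ℝ) :
    (∏ i, (X - C (![(a : ℂ), (-a : ℝ), (d : ℝ) * Complex.I, -((d : ℝ) * Complex.I)] i))) =
      X^4 + (C ((d:ℂ))^2 - C ((a:ℂ))^2) * X^2 - C ((a:ℂ))^2 * C ((d:ℂ))^2 := by
  have hI : C ((d:ℂ) * Complex.I) ^ 2 = -(C ((d:ℂ)) ^ 2) := by
    rw [← map_pow, ← map_pow, ← map_neg]
    congr 1
    simp [mul_pow, Complex.I_sq]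
  rw [Fin.prod_univ_four]
  simp only [Matrix.cons_val_zero, Matrix.cons_val_one, Matrix.head_cons,
    show ((2:Fin 4)) = (1:Fin 3).succ from rfl, show ((3:Fin 4)) = (2:Fin 3).succ from rfl,
    show ((2:Fin 3)) = (1:Fin 2).succ from rfl, Matrix.cons_val_succ,
    Complex.ofReal_neg, map_neg]
  linear_combination (C ((a:ℂ))^2 - X^2) * hI

set_option maxHeartbeats 1000000 in
theorem my_charmatrix_sq (B : Matrix (Fin 4) (Fin 4) ℂ) :
    (charmatrix (B*B)).map (expand ℂ 2) = charmatrix B * charmatrix (-B) := by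
  refine Matrix.ext fun i j => ?_
  fin_cases i <;> fin_cases j <;>
    simp [Matrix.mul_apply, charmatrix_apply, Fin.sum_univ_four, Matrix.diagonal,
      Matrix.map_apply, map_sub, Polynomial.expand_X, Polynomial.expand_C] <;>
    ring

theorem my_charmatrix_neg (B : Matrix (Fin 4) (Fin 4) ℂ) :
    charmatrix (-B) = -((charmatrix B).map (aeval (-X : ℂ[X]))) := by
  ext i j
  rcases eq_or_ne i j with h | h
  · subst h
    simp [charmatrix_apply, Matrix.diagonal, Matrix.map_apply]
    ring
  · simp [charmatrix_apply, Matrix.diagonal, Matrix.map_apply, h]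

/-- The list (a, -a, id, -id) is realizable if and only if |d| ≤ a. -/
theorem stmt_18 (a d : ℝ) (ha : 0 ≤ a) :
    Realizable ![(a : ℂ), (-a : ℝ), (d : ℝ) * Complex.I, -((d : ℝ) * Complex.I)] ↔
      |d| ≤ a := by
  constructor
  · rintro ⟨A, hA, hcp⟩
    set B : Matrix (Fin 4) (Fin 4) ℂ := A.map (algebraMap ℝ ℂ) with hBdef
    have hB : charpoly B = X^4 + (C ((d:ℂ))^2 - C ((a:ℂ))^2) * X^2
        - C ((a:ℂ))^2 * C ((d:ℂ))^2 := by
      rw [hBdef, Matrix.charpoly_map, hcp, my_prod_eq]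
    -- charpoly of -B
    have hnB : charpoly (-B) = X^4 + (C ((d:ℂ))^2 - C ((a:ℂ))^2) * X^2
        - C ((a:ℂ))^2 * C ((d:ℂ))^2 := by
      rw [Matrix.charpoly, my_charmatrix_neg, Matrix.det_neg]
      have hd2 := AlgHom.map_det (aeval (-X : ℂ[X])) B.charmatrix
      simp only [AlgHom.mapMatrix_apply] at hd2
      rw [← hd2, ← Matrix.charpoly, hB]
      simp only [map_add, map_sub, _root_.map_mul, map_pow, aeval_X, aeval_C, Fintype.card_fin]
      norm_num
    -- factorization of charpoly of B*B
    have hfac : (expand ℂ 2) (charpoly (B*B)) = charpoly B * charpoly (-B) := by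
      have h := congrArg Matrix.det (my_charmatrix_sq B)
      rw [Matrix.det_mul] at h
      have h2 := AlgHom.map_det (expand ℂ 2) (charmatrix (B*B))
      simp only [AlgHom.mapMatrix_apply] at h2
      rw [← h2] at h
      exact h
    have hqq : charpoly (B*B)
        = (X^2 + (C ((d:ℂ))^2 - C ((a:ℂ))^2) * X - C ((a:ℂ))^2 * C ((d:ℂ))^2)^2 := by
      apply Polynomial.expand_injective (R := ℂ) (n := 2) (by norm_num)
      rw [hfac, hB, hnB]
      simp only [map_add, map_sub, _root_.map_mul, map_pow, Polynomial.expand_X,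
        Polynomial.expand_C]
      ring
    have hco : (charpoly (B*B)).coeff 3 = 2*((d:ℂ)^2 - (a:ℂ)^2) := by
      have hpoly : (X^2 + (C ((d:ℂ))^2 - C ((a:ℂ))^2) * X - C ((a:ℂ))^2 * C ((d:ℂ))^2)^2
          = X^4 + C (2*((d:ℂ)^2-(a:ℂ)^2)) * X^3
            + C (((d:ℂ)^2-(a:ℂ)^2)^2 - 2*((a:ℂ)^2*(d:ℂ)^2)) * X^2
            + C (-(2*((d:ℂ)^2-(a:ℂ)^2)*((a:ℂ)^2*(d:ℂ)^2))) * X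
            + C (((a:ℂ)^2*(d:ℂ)^2)^2) := by
        simp only [map_add, map_sub, map_neg, _root_.map_mul, map_pow, map_ofNat]
        ring
      rw [hqq, hpoly]
      simp only [coeff_add, coeff_C_mul, coeff_X_pow, coeff_C, Polynomial.coeff_X]
      norm_num
    have htr : Matrix.trace (B*B) = 2*((a:ℂ)^2 - (d:ℂ)^2) := by
      have h := Matrix.trace_eq_neg_charpoly_coeff (B*B)
      simp only [Fintype.card_fin] at h
      rw [h]
      norm_num [hco]
      ring
    have hBB : B*B = (A*A).map (algebraMap ℝ ℂ) := by
      ext i j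
      simp [hBdef, Matrix.mul_apply, Matrix.map_apply, map_sum]
    have htrmap : Matrix.trace (B*B) = ((Matrix.trace (A*A) : ℝ) : ℂ) := by
      rw [hBB]
      simp [Matrix.trace, Matrix.diag, Matrix.map_apply]
    have hreal : Matrix.trace (A*A) = 2*(a^2-d^2) := by
      have : ((Matrix.trace (A*A) : ℝ) : ℂ) = ((2*(a^2-d^2) : ℝ) : ℂ) := by
        rw [← htrmap, htr]
        push_cast
        ring
      exact_mod_cast this
    have hnn : 0 ≤ Matrix.trace (A*A) := by
      rw [Matrix.trace]
      refine Finset.sum_nonneg fun i _ => ?_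
      rw [Matrix.diag_apply, Matrix.mul_apply]
      exact Finset.sum_nonneg fun j _ => mul_nonneg (hA i j) (hA j i)
    rw [abs_le]
    constructor <;> nlinarith [hreal ▸ hnn]
  · intro hd
    refine ⟨!![0, (a+d)/2, 0, (a-d)/2; (a-d)/2, 0, (a+d)/2, 0;
        0, (a-d)/2, 0, (a+d)/2; (a+d)/2, 0, (a-d)/2, 0], ?_, ?_⟩
    · have h1 : 0 ≤ (a+d)/2 := by cases abs_cases d <;> linarith
      have h2 : 0 ≤ (a-d)/2 := by cases abs_cases d <;> linarith
      intro i j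
      fin_cases i <;> fin_cases j <;> simp [h1, h2]
    · rw [my_charpoly_circ, my_prod_eq]
      have e1 : (C ((a+d)/2) + C ((a-d)/2) : ℝ[X]) = C a := by
        rw [← map_add]; congr 1; ring
      have e2 : (C ((a+d)/2) - C ((a-d)/2) : ℝ[X]) = C d := by
        rw [← map_sub]; congr 1; ring
      rw [e1, e2]
      simp only [Polynomial.map_add, Polynomial.map_sub, Polynomial.map_mul,
        Polynomial.map_pow, Polynomial.map_X, Polynomial.map_C]
      norm_num
end

section
/- Let a, c ≤ 0 and b, d be real numbers, and let δ be a real number with δ > 0 and δ ≥ −2(a+c). If b² + d² ≤ −2δ(a+c) − 4ac − (a² + c²), then the list (δ, a+ib, a−ib, c+id, c−id) is persymmetrically realizable: there exists a 5×5 entrywise nonnegative persymmetric real matrix whose characteristic polynomial over ℂ equals (X−δ)(X−(a+ib))(X−(a−ib))(X−(c+id))(X−(c−id)). -/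
open Matrix Polynomial

set_option maxHeartbeats 1000000 in
lemma charpoly_aux (e f g h k : ℝ) :
    (Matrix.charpoly !![e,1,0,0,0; f,0,1,0,0; g,0,0,1,0; h,0,0,0,1; k,h,g,f,e]) =
      X^5 - C (2*e) * X^4 + C (e^2-2*f) * X^3 + C (2*e*f-2*g) * X^2
        + C (f^2+2*e*g-2*h) * X + C (2*f*g+2*e*h-k) := by
  have hm : charmatrix !![e,1,0,0,0; f,0,1,0,0; g,0,0,1,0; h,0,0,0,1; k,h,g,f,e]
      = !![X - C e, -1, 0, 0, 0;
           -C f, X, -1, 0, 0;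
           -C g, 0, X, -1, 0;
           -C h, 0, 0, X, -1;
           -C k, -C h, -C g, -C f, X - C e] := by
    ext i j
    fin_cases i <;> fin_cases j <;>
      simp [charmatrix_apply_eq, charmatrix_apply_ne]
  rw [Matrix.charpoly, hm]
  simp [Matrix.det_succ_row_zero, Fin.sum_univ_succ]
  simp [Fin.succAbove, Fin.lt_def]
  norm_num [map_ofNat]
  ring

lemma build (e f g h k r s1 s2 t1 t2 : ℝ)
    (h4 : 2*e = r + s1 + t1)
    (h3 : e^2 - 2*f = s2 + t2 + s1*t1 + r*(s1+t1))
    (h2 : 2*e*f - 2*g = -(s1*t2 + t1*s2 + r*(s2+t2+s1*t1)))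
    (h1 : f^2 + 2*e*g - 2*h = s2*t2 + r*(s1*t2+t1*s2))
    (h0 : 2*f*g + 2*e*h - k = -(r*s2*t2)) :
    (Matrix.charpoly !![e,1,0,0,0; f,0,1,0,0; g,0,0,1,0; h,0,0,0,1; k,h,g,f,e]) =
      (X - C r) * (X^2 - C s1 * X + C s2) * (X^2 - C t1 * X + C t2) := by
  rw [charpoly_aux, h0, h1, h2, h3, h4]
  simp only [_root_.map_add, _root_.map_mul, _root_.map_sub, _root_.map_neg]
  ring

lemma quad_fac (a b : ℝ) :
    ((X:ℂ[X])^2 - C (2*(a:ℂ))*X + C ((a:ℂ)^2+(b:ℂ)^2))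
      = (X - C ((a:ℂ)+b*Complex.I)) * (X - C ((a:ℂ)-b*Complex.I)) := by
  have h2 : ((a:ℂ)+b*Complex.I) * ((a:ℂ)-b*Complex.I) = (a:ℂ)^2+(b:ℂ)^2 := by
    ring_nf
    rw [Complex.I_sq]
    ring
  have h1 : ((a:ℂ)+b*Complex.I) + ((a:ℂ)-b*Complex.I) = 2*(a:ℂ) := by ring
  rw [← h1, ← h2]
  simp only [_root_.map_add, _root_.map_mul]
  ring

set_option maxHeartbeats 2000000 in
/-- If a, c ≤ 0, δ > 0 with δ ≥ -2(a+c) and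
b² + d² ≤ -2δ(a+c) - 4ac - (a² + c²), then the list (δ, a±ib, c±id) is
persymmetrically realizable. -/
theorem stmt_19 (a c b d δ : ℝ) (ha : a ≤ 0) (hc : c ≤ 0)
    (hδ : 0 < δ) (hδ' : -2 * (a + c) ≤ δ)
    (hbd : b ^ 2 + d ^ 2 ≤ -2 * δ * (a + c) - 4 * a * c - (a ^ 2 + c ^ 2)) :
    ∃ A : Matrix (Fin 5) (Fin 5) ℝ, (∀ i j, 0 ≤ A i j) ∧
      (∀ i j, A i j = A j.rev i.rev) ∧
      (Matrix.charpoly A).map (algebraMap ℝ ℂ) =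
        (X - C (δ : ℂ)) * (X - C ((a : ℂ) + b * Complex.I)) *
          (X - C ((a : ℂ) - b * Complex.I)) * (X - C ((c : ℂ) + d * Complex.I)) *
          (X - C ((c : ℂ) - d * Complex.I)) := by
  have hac : 0 ≤ a * c := by nlinarith
  have hm0 : (0:ℝ) ≤ a^2+b^2 := by positivity
  have hn0 : (0:ℝ) ≤ c^2+d^2 := by positivity
  have h4 : 0 ≤ δ + 2*a + 2*c := by linarith
  have h3 : (a^2+b^2) + (c^2+d^2) + 4*a*c + 2*δ*(a+c) ≤ 0 := by nlinarith
  have hS : 0 ≤ -2*a*(c^2+d^2) - 2*c*(a^2+b^2) := by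
    nlinarith [mul_nonneg (neg_nonneg.2 ha) hn0, mul_nonneg (neg_nonneg.2 hc) hm0]
  have hsum2 : 0 ≤ (a^2+b^2)+(c^2+d^2)+4*a*c := by
    nlinarith [sq_nonneg (a+c), sq_nonneg b, sq_nonneg d]
  have h2 : -2*a*(c^2+d^2) - 2*c*(a^2+b^2) - δ*((a^2+b^2)+(c^2+d^2)+4*a*c) ≤ 0 := by
    nlinarith [mul_nonneg h4 hsum2, mul_nonneg (neg_nonneg.2 ha) hm0,
      mul_nonneg (neg_nonneg.2 hc) hn0, mul_nonneg hac (by linarith : 0 ≤ -(a+c))]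
  have h1 : (a^2+b^2)*(c^2+d^2) + 2*δ*(a*(c^2+d^2)+c*(a^2+b^2)) ≤ 0 := by
    by_cases hz : a + c = 0
    · have ha0 : a = 0 := by linarith
      have hc0 : c = 0 := by linarith
      subst ha0; subst hc0
      nlinarith [sq_nonneg b, sq_nonneg d, sq_nonneg (b*d)]
    · have hpos : 0 < -(2*(a+c)) := by
        rcases lt_or_eq_of_le (by linarith : a + c ≤ 0) with h | h
        · linarith
        · exact absurd h hz
      have hP : 0 ≤ (-(2*(a+c))) *
          (δ*(-2*a*(c^2+d^2)-2*c*(a^2+b^2)) - (a^2+b^2)*(c^2+d^2)) := by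
        nlinarith [mul_nonneg (by linarith :
            0 ≤ δ*(-(2*(a+c))) - ((a^2+b^2)+(c^2+d^2)+4*a*c)) hS,
          mul_nonneg (mul_nonneg (neg_nonneg.2 ha) hn0) hn0,
          mul_nonneg (mul_nonneg (neg_nonneg.2 hc) hm0) hm0,
          mul_nonneg hac hS]
      by_contra hcon
      push_neg at hcon
      nlinarith [mul_pos hpos (by nlinarith : (0:ℝ) <
        (a^2+b^2)*(c^2+d^2) - δ*(-2*a*(c^2+d^2)-2*c*(a^2+b^2)))]
  -- define matrix entries
  set ee : ℝ := (δ+2*a+2*c)/2 with hee_def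
  set ff : ℝ := (ee^2 - ((a^2+b^2)+(c^2+d^2)+4*a*c+2*δ*(a+c)))/2 with hff_def
  set gg : ℝ := (2*ee*ff - (-2*a*(c^2+d^2)-2*c*(a^2+b^2)-δ*((a^2+b^2)+(c^2+d^2)+4*a*c)))/2
    with hgg_def
  set hh : ℝ := (ff^2+2*ee*gg - ((a^2+b^2)*(c^2+d^2)+2*δ*(a*(c^2+d^2)+c*(a^2+b^2))))/2
    with hhh_def
  set kk : ℝ := 2*ff*gg+2*ee*hh + δ*((a^2+b^2)*(c^2+d^2)) with hkk_def
  have hee : 0 ≤ ee := by rw [hee_def]; linarith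
  have hff : 0 ≤ ff := by rw [hff_def]; nlinarith [sq_nonneg ee]
  have hgg : 0 ≤ gg := by rw [hgg_def]; nlinarith [mul_nonneg hee hff]
  have hhh : 0 ≤ hh := by rw [hhh_def]; nlinarith [sq_nonneg ff, mul_nonneg hee hgg]
  have hkk : 0 ≤ kk := by
    rw [hkk_def]
    nlinarith [mul_nonneg hff hgg, mul_nonneg hee hhh,
      mul_nonneg (mul_nonneg hδ.le hm0) hn0]
  refine ⟨!![ee,1,0,0,0; ff,0,1,0,0; gg,0,0,1,0; hh,0,0,0,1; kk,hh,gg,ff,ee], ?_, ?_, ?_⟩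
  · intro i j
    fin_cases i <;> fin_cases j <;> simp <;> assumption
  · intro i j
    fin_cases i <;> fin_cases j <;> rfl
  · have hR := build ee ff gg hh kk δ (2*a) (a^2+b^2) (2*c) (c^2+d^2)
      (by rw [hee_def]; ring)
      (by rw [hff_def]; ring)
      (by rw [hgg_def]; ring)
      (by rw [hhh_def]; ring)
      (by rw [hkk_def]; ring)
    rw [hR]
    simp only [Polynomial.map_mul, Polynomial.map_sub, Polynomial.map_add,
      Polynomial.map_pow, Polynomial.map_X, Polynomial.map_C, Complex.coe_algebraMap]
    rw [show ((2*a:ℝ):ℂ) = 2*(a:ℂ) by push_cast; ring,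
      show ((a^2+b^2:ℝ):ℂ) = (a:ℂ)^2+(b:ℂ)^2 by push_cast; ring,
      show ((2*c:ℝ):ℂ) = 2*(c:ℂ) by push_cast; ring,
      show ((c^2+d^2:ℝ):ℂ) = (c:ℂ)^2+(d:ℂ)^2 by push_cast; ring,
      quad_fac a b, quad_fac c d]
    ring
end
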